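/- arXiv:1110.4297 — 2 statements merged into one kernel-verified Lean document; each statement's English description precedes it below -/
import Mathlib

section
/- The subspace v𝔽 = {F ∈ 𝔽 : hF = 0 and ω(F) = 0} decomposes as the orthogonal direct sum v𝔽 = 𝔽₂ ⊕ 𝔽₃ ⊕ 𝔽₄ ⊕ 𝔽₅ ⊕ 𝔽₆ ⊕ 𝔽₇ ⊕ 𝔽₈, invariant under the action on 𝔽 of every linear isometry A of V with A∘φ = φ∘A and Aξ = ξ, where 𝔽₂ = {F = F₇(F)}, 𝔽₃ = {F = F₈(F)}, 𝔽₄ = {F ∈ (v𝔽)′ : F = F₄(F) = F₅(F), f(F)(ξ) = 0}, 𝔽₅ = {F ∈ (v𝔽)′ : F = F₄(F) = −F₅(F), f*(F)(ξ) = 0}, 𝔽₆ = {F ∈ (v𝔽)′ : F = −F₄(F) = F₅(F)}, 𝔽₇ = {F ∈ (v𝔽)′ : F = −F₄(F) = −F₅(F)}, 𝔽₈ = {F ∈ 𝔽 : hF = 0, F(x,y,ξ) = 0 for all x,y}. The components of F ∈ v𝔽 are p₂(F) = F₇(F), p₃(F) = F₈(F), p₄(F) = (1/4){F₂(F)+F₄(F)+F₅(F)+F₆(F)−4F₇(F)−F₃(F)},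 p₅(F) = (1/4){F₂(F)+F₄(F)−F₅(F)−F₆(F)−4F₈(F)−F₃(F)}, p₆(F) = (1/4){F₂(F)−F₄(F)+F₅(F)−F₆(F)−F₃(F)}, p₇(F) = (1/4){F₂(F)−F₄(F)−F₅(F)+F₆(F)−F₃(F)}, and p₈(F) = F₁(F) − F₃(F). -/
open scoped BigOperators RealInnerProductSpace

noncomputable section

variable {V : Type*} [NormedAddCommGroup V] [InnerProductSpace ℝ V]

/-- A map `V → V → V → ℝ` linear in each of its three arguments. -/
def Trilinear (F : V → V → V → ℝ) : Prop :=
  (∀ y z, IsLinearMap ℝ fun x => F x y z) ∧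
  (∀ x z, IsLinearMap ℝ fun y => F x y z) ∧
  (∀ x y, IsLinearMap ℝ fun z => F x y z)

/-- Almost contact metric structure `(φ, ξ, η, g)` on `V` with `dim V = 2n+1`. -/
def ACM (n : ℕ) (φ : V →ₗ[ℝ] V) (ξ : V) (η : V →ₗ[ℝ] ℝ) : Prop :=
  Module.finrank ℝ V = 2 * n + 1 ∧
  (∀ x, φ (φ x) = -x + η x • ξ) ∧
  φ ξ = 0 ∧
  (∀ x, η (φ x) = 0) ∧
  ⟪ξ, ξ⟫ = 1 ∧
  (∀ x y, ⟪φ x, φ y⟫ = ⟪x, y⟫ - η x * η y)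

/-- Membership in the space `𝔽` of trilinear forms with the symmetries (1). -/
def InF (φ : V →ₗ[ℝ] V) (ξ : V) (η : V →ₗ[ℝ] ℝ) (F : V → V → V → ℝ) : Prop :=
  Trilinear F ∧
  (∀ x y z, F x y z = -F x z y) ∧
  (∀ x y z, F x y z = -F x (φ y) (φ z) + η y * F x ξ z + η z * F x y ξ)

/-- `h x = -φ²x`. -/
def hMap (φ : V →ₗ[ℝ] V) (x : V) : V := -φ (φ x)

/-- `hF(x,y,z) = F(hx,hy,hz)`. -/
def hF (φ : V →ₗ[ℝ] V) (F : V → V → V → ℝ) : V → V → V → ℝ :=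
  fun x y z => F (hMap φ x) (hMap φ y) (hMap φ z)

def F1 (ξ : V) (η : V →ₗ[ℝ] ℝ) (F : V → V → V → ℝ) : V → V → V → ℝ :=
  fun x y z => η x * F ξ y z

def F2 (ξ : V) (η : V →ₗ[ℝ] ℝ) (F : V → V → V → ℝ) : V → V → V → ℝ :=
  fun x y z => η y * F x ξ z - η z * F x ξ y

def F3 (ξ : V) (η : V →ₗ[ℝ] ℝ) (F : V → V → V → ℝ) : V → V → V → ℝ :=
  fun x y z => η x * η y * F ξ ξ z - η x * η z * F ξ ξ y

def F4 (φ : V →ₗ[ℝ] V) (ξ : V) (η : V →ₗ[ℝ] ℝ) (F : V → V → V → ℝ) : V → V → V → ℝ :=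
  fun x y z => η y * F (φ x) ξ (φ z) - η z * F (φ x) ξ (φ y)

def F5 (ξ : V) (η : V →ₗ[ℝ] ℝ) (F : V → V → V → ℝ) : V → V → V → ℝ :=
  fun x y z => η y * F z ξ x - η z * F y ξ x

def F6 (φ : V →ₗ[ℝ] V) (ξ : V) (η : V →ₗ[ℝ] ℝ) (F : V → V → V → ℝ) : V → V → V → ℝ :=
  fun x y z => η y * F (φ z) ξ (φ x) - η z * F (φ y) ξ (φ x)

/-- `f(F)(z) = Σᵢ F(eᵢ, eᵢ, z)`. -/
def fTr {ι : Type*} [Fintype ι] (e : OrthonormalBasis ι ℝ V) (F : V → V → V → ℝ) (z : V) : ℝ :=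
  ∑ i, F (e i) (e i) z

/-- `f*(F)(z) = Σᵢ F(eᵢ, φ eᵢ, z)`. -/
def fTrStar {ι : Type*} [Fintype ι] (φ : V →ₗ[ℝ] V) (e : OrthonormalBasis ι ℝ V)
    (F : V → V → V → ℝ) (z : V) : ℝ :=
  ∑ i, F (e i) (φ (e i)) z

/-- The inner product on `𝔽`: `⟨F,G⟩ = Σ_{i,j,k} F(eᵢ,eⱼ,e_k) G(eᵢ,eⱼ,e_k)`. -/
def innerF {ι : Type*} [Fintype ι] (e : OrthonormalBasis ι ℝ V) (F G : V → V → V → ℝ) : ℝ :=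
  ∑ i, ∑ j, ∑ k, F (e i) (e j) (e k) * G (e i) (e j) (e k)

def F7 (n : ℕ) {ι : Type*} [Fintype ι] (e : OrthonormalBasis ι ℝ V) (ξ : V) (η : V →ₗ[ℝ] ℝ)
    (F : V → V → V → ℝ) : V → V → V → ℝ :=
  fun x y z => (1 / (2 * (n : ℝ))) * fTr e F ξ * (η z * ⟪x, y⟫ - η y * ⟪x, z⟫)

def F8 (n : ℕ) (φ : V →ₗ[ℝ] V) {ι : Type*} [Fintype ι] (e : OrthonormalBasis ι ℝ V) (ξ : V)
    (η : V →ₗ[ℝ] ℝ) (F : V → V → V → ℝ) : V → V → V → ℝ :=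
  fun x y z => -(1 / (2 * (n : ℝ))) * fTrStar φ e F ξ * (η z * ⟪x, φ y⟫ - η y * ⟪x, φ z⟫)

def F9 (n : ℕ) (φ : V →ₗ[ℝ] V) {ι : Type*} [Fintype ι] (e : OrthonormalBasis ι ℝ V)
    (F : V → V → V → ℝ) : V → V → V → ℝ :=
  fun x y z => (1 / (2 * ((n : ℝ) - 1))) *
    (⟪hMap φ x, hMap φ y⟫ * fTr e F z - ⟪hMap φ x, hMap φ z⟫ * fTr e F y
      - ⟪x, φ y⟫ * fTr e F (φ z) + ⟪x, φ z⟫ * fTr e F (φ y))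

def F10 (φ : V →ₗ[ℝ] V) (F : V → V → V → ℝ) : V → V → V → ℝ :=
  fun x y z => (1 / 2) * (F x y z + F (φ x) (φ y) z)

def F11 (φ : V →ₗ[ℝ] V) (F : V → V → V → ℝ) : V → V → V → ℝ :=
  fun x y z => (1 / 6) * (F x y z + F y z x + F z x y
    - F (φ x) (φ y) z - F (φ y) (φ z) x - F (φ z) (φ x) y)

def F12 (φ : V →ₗ[ℝ] V) (F : V → V → V → ℝ) : V → V → V → ℝ :=
  fun x y z => (1 / 2) * (F x y z - F (φ x) (φ y) z)

/-- The action of a linear isometry `A` of `V` on trilinear forms: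
`(A·F)(x,y,z) = F(A⁻¹x, A⁻¹y, A⁻¹z)`. -/
def actA (A : V ≃ₗᵢ[ℝ] V) (F : V → V → V → ℝ) : V → V → V → ℝ :=
  fun x y z => F (A.symm x) (A.symm y) (A.symm z)

def L1 (ξ : V) (η : V →ₗ[ℝ] ℝ) (F : V → V → V → ℝ) : V → V → V → ℝ :=
  fun x y z => F x y z - 2 * F3 ξ η F x y z

def L2 (ξ : V) (η : V →ₗ[ℝ] ℝ) (F : V → V → V → ℝ) : V → V → V → ℝ :=
  fun x y z => F x y z - 2 * (F1 ξ η F x y z + F2 ξ η F x y z)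

def L3 (ξ : V) (η : V →ₗ[ℝ] ℝ) (F : V → V → V → ℝ) : V → V → V → ℝ :=
  fun x y z => F2 ξ η F x y z - F1 ξ η F x y z

def L4 (φ : V →ₗ[ℝ] V) (ξ : V) (η : V →ₗ[ℝ] ℝ) (F : V → V → V → ℝ) : V → V → V → ℝ :=
  fun x y z => -F4 φ ξ η F x y z

def L5 (ξ : V) (η : V →ₗ[ℝ] ℝ) (F : V → V → V → ℝ) : V → V → V → ℝ :=
  fun x y z => -F5 ξ η F x y z

def L6 (n : ℕ) {ι : Type*} [Fintype ι] (e : OrthonormalBasis ι ℝ V) (ξ : V) (η : V →ₗ[ℝ] ℝ)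
    (F : V → V → V → ℝ) : V → V → V → ℝ :=
  fun x y z => F x y z - 2 * F7 n e ξ η F x y z

def L7 (n : ℕ) (φ : V →ₗ[ℝ] V) {ι : Type*} [Fintype ι] (e : OrthonormalBasis ι ℝ V) (ξ : V)
    (η : V →ₗ[ℝ] ℝ) (F : V → V → V → ℝ) : V → V → V → ℝ :=
  fun x y z => F x y z - 2 * F8 n φ e ξ η F x y z

/-- The subspace `𝔽₁ = {F ∈ 𝔽 : F = F₃(F)}`. -/
def MemF1sub (φ : V →ₗ[ℝ] V) (ξ : V) (η : V →ₗ[ℝ] ℝ) (F : V → V → V → ℝ) : Prop :=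
  InF φ ξ η F ∧ F = F3 ξ η F

/-- The subspace `v𝔽 = {F ∈ 𝔽 : hF = 0, ω(F) = 0}`. -/
def MemVF (φ : V →ₗ[ℝ] V) (ξ : V) (η : V →ₗ[ℝ] ℝ) (F : V → V → V → ℝ) : Prop :=
  InF φ ξ η F ∧ hF φ F = 0 ∧ ∀ z, F ξ ξ z = 0

/-- The subspace `h𝔽 = {F ∈ 𝔽 : F₁(F) = F₂(F) = 0}`. -/
def MemHF (φ : V →ₗ[ℝ] V) (ξ : V) (η : V →ₗ[ℝ] ℝ) (F : V → V → V → ℝ) : Prop :=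
  InF φ ξ η F ∧ F1 ξ η F = 0 ∧ F2 ξ η F = 0

/-- The subspace `(v𝔽)′ = {F ∈ 𝔽 : hF = 0, F(ξ,·,·) = 0}`. -/
def MemVF' (φ : V →ₗ[ℝ] V) (ξ : V) (η : V →ₗ[ℝ] ℝ) (F : V → V → V → ℝ) : Prop :=
  InF φ ξ η F ∧ hF φ F = 0 ∧ ∀ y z, F ξ y z = 0

/-- The subspace `𝔽₈ = {F ∈ 𝔽 : hF = 0, F(·,·,ξ) = 0}`. -/
def MemF8sub (φ : V →ₗ[ℝ] V) (ξ : V) (η : V →ₗ[ℝ] ℝ) (F : V → V → V → ℝ) : Prop :=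
  InF φ ξ η F ∧ hF φ F = 0 ∧ ∀ x y, F x y ξ = 0

/-- The subspace `𝒩 = {F ∈ (v𝔽)′ : F = F₄(F)}`. -/
def MemN (φ : V →ₗ[ℝ] V) (ξ : V) (η : V →ₗ[ℝ] ℝ) (F : V → V → V → ℝ) : Prop :=
  MemVF' φ ξ η F ∧ F = F4 φ ξ η F

/-- The subspace `𝒩̃ = {F ∈ (v𝔽)′ : F = -F₄(F)}`. -/
def MemNt (φ : V →ₗ[ℝ] V) (ξ : V) (η : V →ₗ[ℝ] ℝ) (F : V → V → V → ℝ) : Prop :=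
  MemVF' φ ξ η F ∧ F = -F4 φ ξ η F

/-- The subspace `𝒬𝒮𝔽 = {F ∈ (v𝔽)′ : F = F₄(F) = F₅(F)}`. -/
def MemQS (φ : V →ₗ[ℝ] V) (ξ : V) (η : V →ₗ[ℝ] ℝ) (F : V → V → V → ℝ) : Prop :=
  MemVF' φ ξ η F ∧ F = F4 φ ξ η F ∧ F = F5 ξ η F

/-- The subspace `𝒬𝒦𝔽 = {F ∈ (v𝔽)′ : F = F₄(F) = -F₅(F)}`. -/
def MemQK (φ : V →ₗ[ℝ] V) (ξ : V) (η : V →ₗ[ℝ] ℝ) (F : V → V → V → ℝ) : Prop :=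
  MemVF' φ ξ η F ∧ F = F4 φ ξ η F ∧ F = -F5 ξ η F

/-- The subspace `𝔽₆ = {F ∈ (v𝔽)′ : F = -F₄(F) = F₅(F)}`. -/
def MemF6sub (φ : V →ₗ[ℝ] V) (ξ : V) (η : V →ₗ[ℝ] ℝ) (F : V → V → V → ℝ) : Prop :=
  MemVF' φ ξ η F ∧ F = -F4 φ ξ η F ∧ F = F5 ξ η F

/-- The subspace `𝔽₇ = {F ∈ (v𝔽)′ : F = -F₄(F) = -F₅(F)}`. -/
def MemF7sub (φ : V →ₗ[ℝ] V) (ξ : V) (η : V →ₗ[ℝ] ℝ) (F : V → V → V → ℝ) : Prop :=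
  MemVF' φ ξ η F ∧ F = -F4 φ ξ η F ∧ F = -F5 ξ η F

/-- The subspace `𝔽₂ = {F ∈ 𝔽 : F = F₇(F)}`. -/
def MemF2sub (n : ℕ) {ι : Type*} [Fintype ι] (e : OrthonormalBasis ι ℝ V) (φ : V →ₗ[ℝ] V)
    (ξ : V) (η : V →ₗ[ℝ] ℝ) (F : V → V → V → ℝ) : Prop :=
  InF φ ξ η F ∧ F = F7 n e ξ η F

/-- The subspace `𝔽₃ = {F ∈ 𝔽 : F = F₈(F)}`. -/
def MemF3sub (n : ℕ) {ι : Type*} [Fintype ι] (e : OrthonormalBasis ι ℝ V) (φ : V →ₗ[ℝ] V)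
    (ξ : V) (η : V →ₗ[ℝ] ℝ) (F : V → V → V → ℝ) : Prop :=
  InF φ ξ η F ∧ F = F8 n φ e ξ η F

/-- The subspace `𝔽₄ = {F ∈ 𝔽 : F = F₄(F) = F₅(F), f(F)(ξ) = 0}`. -/
def MemF4sub (n : ℕ) {ι : Type*} [Fintype ι] (e : OrthonormalBasis ι ℝ V) (φ : V →ₗ[ℝ] V)
    (ξ : V) (η : V →ₗ[ℝ] ℝ) (F : V → V → V → ℝ) : Prop :=
  InF φ ξ η F ∧ F = F4 φ ξ η F ∧ F = F5 ξ η F ∧ fTr e F ξ = 0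

/-- The subspace `𝔽₅ = {F ∈ 𝔽 : F = F₄(F) = -F₅(F), f*(F)(ξ) = 0}`. -/
def MemF5sub (n : ℕ) {ι : Type*} [Fintype ι] (e : OrthonormalBasis ι ℝ V) (φ : V →ₗ[ℝ] V)
    (ξ : V) (η : V →ₗ[ℝ] ℝ) (F : V → V → V → ℝ) : Prop :=
  InF φ ξ η F ∧ F = F4 φ ξ η F ∧ F = -F5 ξ η F ∧ fTrStar φ e F ξ = 0

/-- The subspace `𝔽₄ = {F ∈ (v𝔽)′ : F = F₄(F) = F₅(F), f(F)(ξ) = 0}`. -/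
def MemF4sub' (n : ℕ) {ι : Type*} [Fintype ι] (e : OrthonormalBasis ι ℝ V) (φ : V →ₗ[ℝ] V)
    (ξ : V) (η : V →ₗ[ℝ] ℝ) (F : V → V → V → ℝ) : Prop :=
  MemVF' φ ξ η F ∧ F = F4 φ ξ η F ∧ F = F5 ξ η F ∧ fTr e F ξ = 0

/-- The subspace `𝔽₅ = {F ∈ (v𝔽)′ : F = F₄(F) = -F₅(F), f*(F)(ξ) = 0}`. -/
def MemF5sub' (n : ℕ) {ι : Type*} [Fintype ι] (e : OrthonormalBasis ι ℝ V) (φ : V →ₗ[ℝ] V)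
    (ξ : V) (η : V →ₗ[ℝ] ℝ) (F : V → V → V → ℝ) : Prop :=
  MemVF' φ ξ η F ∧ F = F4 φ ξ η F ∧ F = -F5 ξ η F ∧ fTrStar φ e F ξ = 0

/-- The subspace `𝔽₉ = {F ∈ 𝔽 : F = hF = F₉(F)}`. -/
def MemF9sub (n : ℕ) {ι : Type*} [Fintype ι] (e : OrthonormalBasis ι ℝ V) (φ : V →ₗ[ℝ] V)
    (ξ : V) (η : V →ₗ[ℝ] ℝ) (F : V → V → V → ℝ) : Prop :=
  InF φ ξ η F ∧ F = hF φ F ∧ F = F9 n φ e F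

/-- The subspace `𝔽₁₀ = {F ∈ 𝔽 : F = hF = F₁₀(F) - F₉(F)}`. -/
def MemF10sub (n : ℕ) {ι : Type*} [Fintype ι] (e : OrthonormalBasis ι ℝ V) (φ : V →ₗ[ℝ] V)
    (ξ : V) (η : V →ₗ[ℝ] ℝ) (F : V → V → V → ℝ) : Prop :=
  InF φ ξ η F ∧ F = hF φ F ∧ F = F10 φ F - F9 n φ e F

/-- The subspace `𝔽₁₁ = {F ∈ 𝔽 : F = hF = F₁₁(F)}`. -/
def MemF11sub (φ : V →ₗ[ℝ] V) (ξ : V) (η : V →ₗ[ℝ] ℝ) (F : V → V → V → ℝ) : Prop :=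
  InF φ ξ η F ∧ F = hF φ F ∧ F = F11 φ F

/-- The subspace `𝔽₁₂ = {F ∈ 𝔽 : F = hF = F₁₂(F) - F₁₁(F)}`. -/
def MemF12sub (φ : V →ₗ[ℝ] V) (ξ : V) (η : V →ₗ[ℝ] ℝ) (F : V → V → V → ℝ) : Prop :=
  InF φ ξ η F ∧ F = hF φ F ∧ F = F12 φ F - F11 φ F

/-- The seven subspaces `𝔽₂, …, 𝔽₈` of `v𝔽`. -/
def P16 (n : ℕ) {ι : Type*} [Fintype ι] (e : OrthonormalBasis ι ℝ V) (φ : V →ₗ[ℝ] V)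
    (ξ : V) (η : V →ₗ[ℝ] ℝ) : Fin 7 → (V → V → V → ℝ) → Prop
  | 0 => MemF2sub n e φ ξ η
  | 1 => MemF3sub n e φ ξ η
  | 2 => MemF4sub' n e φ ξ η
  | 3 => MemF5sub' n e φ ξ η
  | 4 => MemF6sub φ ξ η
  | 5 => MemF7sub φ ξ η
  | 6 => MemF8sub φ ξ η

/-- The projections `p₂, …, p₈`. -/
def p16 (n : ℕ) {ι : Type*} [Fintype ι] (e : OrthonormalBasis ι ℝ V) (φ : V →ₗ[ℝ] V)
    (ξ : V) (η : V →ₗ[ℝ] ℝ) (F : V → V → V → ℝ) : Fin 7 → (V → V → V → ℝ)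
  | 0 => F7 n e ξ η F
  | 1 => F8 n φ e ξ η F
  | 2 => fun x y z => (1 / 4) * (F2 ξ η F x y z + F4 φ ξ η F x y z +
      F5 ξ η F x y z + F6 φ ξ η F x y z - 4 * F7 n e ξ η F x y z - F3 ξ η F x y z)
  | 3 => fun x y z => (1 / 4) * (F2 ξ η F x y z + F4 φ ξ η F x y z -
      F5 ξ η F x y z - F6 φ ξ η F x y z - 4 * F8 n φ e ξ η F x y z - F3 ξ η F x y z)
  | 4 => fun x y z => (1 / 4) * (F2 ξ η F x y z - F4 φ ξ η F x y z +
      F5 ξ η F x y z - F6 φ ξ η F x y z - F3 ξ η F x y z)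
  | 5 => fun x y z => (1 / 4) * (F2 ξ η F x y z - F4 φ ξ η F x y z -
      F5 ξ η F x y z + F6 φ ξ η F x y z - F3 ξ η F x y z)
  | 6 => fun x y z => F1 ξ η F x y z - F3 ξ η F x y z

namespace Aux16

variable {V : Type*} [NormedAddCommGroup V] [InnerProductSpace ℝ V]

/-- Bilinearity of a map `V → V → ℝ`. -/
def Bil (B : V → V → ℝ) : Prop :=
  (∀ y, IsLinearMap ℝ fun x => B x y) ∧ (∀ x, IsLinearMap ℝ fun y => B x y)

theorem lin_sum {ι : Type*} (s : Finset ι) {f : V → ℝ} (hf : IsLinearMap ℝ f)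
    (c : ι → ℝ) (v : ι → V) : f (∑ i ∈ s, c i • v i) = ∑ i ∈ s, c i * f (v i) := by
  have := map_sum (hf.mk' f) (fun i => c i • v i) s
  simp only [IsLinearMap.mk'_apply] at this
  rw [this]
  exact Finset.sum_congr rfl fun i _ => by rw [hf.map_smul]; rfl

/-- The hypotheses of an almost contact metric structure. -/
structure Hyp (φ : V →ₗ[ℝ] V) (ξ : V) (η : V →ₗ[ℝ] ℝ) : Prop where
  φ2 : ∀ x : V, φ (φ x) = -x + η x • ξ
  φξ : φ ξ = 0
  ηφ : ∀ x, η (φ x) = 0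
  ξξ : ⟪ξ, ξ⟫ = 1
  met : ∀ x y : V, ⟪φ x, φ y⟫ = ⟪x, y⟫ - η x * η y

variable {φ : V →ₗ[ℝ] V} {ξ : V} {η : V →ₗ[ℝ] ℝ}

theorem Hyp.ηξ (h : Hyp φ ξ η) : η ξ = 1 := by
  have h1 : η ξ • ξ = ξ := by
    have := h.φ2 ξ
    rw [h.φξ, map_zero] at this
    linear_combination (norm := module) -this
  have h2 : ⟪η ξ • ξ, ξ⟫ = ⟪ξ, ξ⟫ := by rw [h1]
  rw [real_inner_smul_left, h.ξξ] at h2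
  linarith

theorem Hyp.ip (h : Hyp φ ξ η) (x : V) : ⟪x, ξ⟫ = η x := by
  have := h.met x ξ
  rw [h.φξ, inner_zero_right, h.ηξ] at this
  linarith

theorem Hyp.ip' (h : Hyp φ ξ η) (x : V) : ⟪ξ, x⟫ = η x := by
  rw [real_inner_comm]; exact h.ip x

theorem Hyp.skew (h : Hyp φ ξ η) (x y : V) : ⟪φ x, y⟫ = -⟪x, φ y⟫ := by
  have h1 : ⟪φ x, φ (φ y)⟫ = ⟪x, φ y⟫ := by
    rw [h.met, h.ηφ]; ring
  rw [h.φ2 y, inner_add_right, inner_neg_right, real_inner_smul_right, h.ip, h.ηφ] at h1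
  linarith

theorem Hyp.hMap_eq (h : Hyp φ ξ η) (x : V) : hMap φ x = x - η x • ξ := by
  unfold hMap
  rw [h.φ2 x]
  abel

theorem Hyp.η_hMap (h : Hyp φ ξ η) (x : V) : η (hMap φ x) = 0 := by
  rw [h.hMap_eq, map_sub, map_smul, h.ηξ]
  simp

end Aux16
namespace Aux16

variable {V : Type*} [NormedAddCommGroup V] [InnerProductSpace ℝ V]
variable {φ : V →ₗ[ℝ] V} {ξ : V} {η : V →ₗ[ℝ] ℝ}

/-- canonical "B-form": `G(x,y,z) = η(y) B(x,z) − η(z) B(x,y)`. -/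
def GB (η : V →ₗ[ℝ] ℝ) (B : V → V → ℝ) : V → V → V → ℝ :=
  fun x y z => η y * B x z - η z * B x y

/-- canonical "A-form": `G(x,y,z) = η(x) A(y,z)`. -/
def GA (η : V →ₗ[ℝ] ℝ) (A : V → V → ℝ) : V → V → V → ℝ :=
  fun x y z => η x * A y z

theorem bil_aux {B : V → V → ℝ} (hB : Bil B) :
    (∀ (a b y : V), B (a + b) y = B a y + B b y) ∧
    (∀ (c : ℝ) (a y : V), B (c • a) y = c * B a y) ∧
    (∀ (x a b : V), B x (a + b) = B x a + B x b) ∧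
    (∀ (c : ℝ) (x a : V), B x (c • a) = c * B x a) :=
  ⟨fun a b y => (hB.1 y).map_add a b, fun c a y => (hB.1 y).map_smul c a,
   fun x a b => (hB.2 x).map_add a b, fun c x a => (hB.2 x).map_smul c a⟩

theorem bil_GB {B : V → V → ℝ} (hB : Bil B) : Trilinear (GB η B) := by
  obtain ⟨h1, h2, h3, h4⟩ := bil_aux hB
  refine ⟨fun y z => ⟨fun a b => ?_, fun c a => ?_⟩,
          fun x z => ⟨fun a b => ?_, fun c a => ?_⟩,
          fun x y => ⟨fun a b => ?_, fun c a => ?_⟩⟩ <;>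
    simp only [GB, h1, h2, h3, h4, map_add, map_smul, smul_eq_mul] <;>
    ring

theorem bil_GA {A : V → V → ℝ} (hA : Bil A) : Trilinear (GA η A) := by
  obtain ⟨h1, h2, h3, h4⟩ := bil_aux hA
  refine ⟨fun y z => ⟨fun a b => ?_, fun c a => ?_⟩,
          fun x z => ⟨fun a b => ?_, fun c a => ?_⟩,
          fun x y => ⟨fun a b => ?_, fun c a => ?_⟩⟩ <;>
    simp only [GA, h1, h2, h3, h4, map_add, map_smul, smul_eq_mul] <;>
    ring

theorem memVF'_GB (h : Hyp φ ξ η) {B : V → V → ℝ} (hB : Bil B)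
    (hB1 : ∀ z, B ξ z = 0) (hB2 : ∀ x, B x ξ = 0) : MemVF' φ ξ η (GB η B) := by
  refine ⟨⟨bil_GB hB, fun x y z => by simp only [GB]; ring, fun x y z => ?_⟩, ?_, ?_⟩
  · simp only [GB, h.ηφ, h.ηξ, hB2]
    ring
  · funext x y z
    simp only [hF, GB, h.η_hMap, Pi.zero_apply]
    ring
  · intro y z; simp only [GB, hB1]; ring

theorem memF8_GA (h : Hyp φ ξ η) {A : V → V → ℝ} (hA : Bil A)
    (hA1 : ∀ z, A ξ z = 0) (hAa : ∀ y z, A y z = -A z y)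
    (hAφ : ∀ y z, A (φ y) (φ z) = -A y z) : MemF8sub φ ξ η (GA η A) := by
  have hA2 : ∀ y, A y ξ = 0 := fun y => by rw [hAa, hA1]; ring
  refine ⟨⟨bil_GA hA, fun x y z => ?_, fun x y z => ?_⟩, ?_, ?_⟩
  · simp only [GA]; rw [hAa y z]; ring
  · simp only [GA, hAφ, hA1, hA2]; ring
  · funext x y z
    simp only [hF, GA, h.η_hMap, Pi.zero_apply]
    ring
  · intro x y; simp only [GA, hA2]; ring

section Expand

variable {F : V → V → V → ℝ}

theorem tri1 (hT : ∀ y z, IsLinearMap ℝ fun x => F x y z) (x v : V) (a : ℝ) (y z : V) :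
    F (x - a • v) y z = F x y z - a * F v y z := by
  have h1 := (hT y z).map_sub x (a • v)
  have h2 := (hT y z).map_smul a v
  simp only [smul_eq_mul] at h1 h2
  calc F (x - a • v) y z = F x y z - F (a • v) y z := h1
  _ = F x y z - a * F v y z := by rw [h2]

theorem tri2 (hT : ∀ x z, IsLinearMap ℝ fun y => F x y z) (x : V) (y v : V) (a : ℝ) (z : V) :
    F x (y - a • v) z = F x y z - a * F x v z := by
  have h1 := (hT x z).map_sub y (a • v)
  have h2 := (hT x z).map_smul a v
  simp only [smul_eq_mul] at h1 h2
  calc F x (y - a • v) z = F x y z - F x (a • v) z := h1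
  _ = F x y z - a * F x v z := by rw [h2]

theorem tri3 (hT : ∀ x y, IsLinearMap ℝ fun z => F x y z) (x y : V) (z v : V) (a : ℝ) :
    F x y (z - a • v) = F x y z - a * F x y v := by
  have h1 := (hT x y).map_sub z (a • v)
  have h2 := (hT x y).map_smul a v
  simp only [smul_eq_mul] at h1 h2
  calc F x y (z - a • v) = F x y z - F x y (a • v) := h1
  _ = F x y z - a * F x y v := by rw [h2]

theorem expand_hF (h : Hyp φ ξ η) (hT : Trilinear F) (hh : hF φ F = 0) (x y z : V) :
    F x y z = η x * F ξ y z + η y * F x ξ z + η z * F x y ξ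
      - η x * η y * F ξ ξ z - η x * η z * F ξ y ξ - η y * η z * F x ξ ξ
      + η x * η y * η z * F ξ ξ ξ := by
  have h0 := congrFun (congrFun (congrFun hh x) y) z
  simp only [hF, Pi.zero_apply] at h0
  rw [h.hMap_eq x, h.hMap_eq y, h.hMap_eq z] at h0
  simp only [tri1 hT.1, tri2 hT.2.1, tri3 hT.2.2] at h0
  linear_combination h0

/-- Structure of elements of `v𝔽`. -/
theorem memVF_decomp (h : Hyp φ ξ η) (hM : MemVF φ ξ η F) (x y z : V) :
    F x y z = η x * F ξ y z + (η y * F x ξ z - η z * F x ξ y) := by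
  have ha := hM.1.2.1
  have hz := hM.2.2
  have h1 : ∀ x, F x ξ ξ = 0 := fun x => by have := ha x ξ ξ; linarith
  have h2 : ∀ y, F ξ y ξ = 0 := fun y => by have := ha ξ y ξ; rw [hz y] at this; linarith
  have := expand_hF h hM.1.1 hM.2.1 x y z
  rw [hz z, hz ξ, h1 x, h2 y, ha x y ξ] at this
  linear_combination this

/-- Structure of elements of `(v𝔽)′`. -/
theorem memVF'_decomp (h : Hyp φ ξ η) (hM : MemVF' φ ξ η F) (x y z : V) :
    F x y z = η y * F x ξ z - η z * F x ξ y := by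
  have ha := hM.1.2.1
  have hz : ∀ y z, F ξ y z = 0 := hM.2.2
  have h1 : ∀ x, F x ξ ξ = 0 := fun x => by have := ha x ξ ξ; linarith
  have := expand_hF h hM.1.1 hM.2.1 x y z
  simp only [hz, h1] at this
  rw [ha x y ξ] at this
  linear_combination this

/-- Structure of elements of `𝔽₈`. -/
theorem memF8_decomp (h : Hyp φ ξ η) (hM : MemF8sub φ ξ η F) (x y z : V) :
    F x y z = η x * F ξ y z := by
  have ha := hM.1.2.1
  have hz : ∀ x y, F x y ξ = 0 := hM.2.2
  have h1 : ∀ x z, F x ξ z = 0 := fun x z => by have := ha x ξ z; rw [hz x z] at this; linarith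
  have := expand_hF h hM.1.1 hM.2.1 x y z
  simp only [hz, h1] at this
  linear_combination this

end Expand

end Aux16
namespace Aux16

variable {V : Type*} [NormedAddCommGroup V] [InnerProductSpace ℝ V]
variable {φ : V →ₗ[ℝ] V} {ξ : V} {η : V →ₗ[ℝ] ℝ}
variable {ι : Type*} [Fintype ι]

theorem lin_mul_const {f : V → ℝ} (hf : IsLinearMap ℝ f) (c : ℝ) :
    IsLinearMap ℝ fun v => f v * c := by
  constructor <;> intro a b <;>
    simp only [hf.map_add, hf.map_smul, smul_eq_mul] <;> ring

theorem const_mul_lin {f : V → ℝ} (hf : IsLinearMap ℝ f) (c : ℝ) :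
    IsLinearMap ℝ fun v => c * f v := by
  constructor <;> intro a b <;>
    simp only [hf.map_add, hf.map_smul, smul_eq_mul] <;> ring

theorem lin_comp_lin {f : V → ℝ} (hf : IsLinearMap ℝ f) (ψ : V →ₗ[ℝ] V) :
    IsLinearMap ℝ fun v => f (ψ v) := by
  constructor <;> intro a b <;>
    simp only [map_add, map_smul, hf.map_add, hf.map_smul]

/-- Expansion of a linear functional along an orthonormal basis. -/
theorem lin_expand (e : OrthonormalBasis ι ℝ V) {f : V → ℝ} (hf : IsLinearMap ℝ f) (v : V) :
    f v = ∑ i, ⟪e i, v⟫ * f (e i) := by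
  conv_lhs => rw [← e.sum_repr' v]
  exact lin_sum Finset.univ hf _ _

/-- Same, for a general family with the reproducing property. -/
theorem lin_expand' {b : ι → V} (hb : ∀ w : V, ∑ i, ⟪b i, w⟫ • b i = w)
    {f : V → ℝ} (hf : IsLinearMap ℝ f) (v : V) :
    f v = ∑ i, ⟪b i, v⟫ * f (b i) := by
  conv_lhs => rw [← hb v]
  exact lin_sum Finset.univ hf _ _

theorem sum_eta_lin (h : Hyp φ ξ η) (e : OrthonormalBasis ι ℝ V) {f : V → ℝ}
    (hf : IsLinearMap ℝ f) : ∑ i, η (e i) * f (e i) = f ξ := by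
  rw [lin_expand e hf ξ]
  exact Finset.sum_congr rfl fun i _ => by rw [h.ip (e i)]

theorem sum_eta_sq (h : Hyp φ ξ η) (e : OrthonormalBasis ι ℝ V) :
    ∑ i, η (e i) * η (e i) = 1 := by
  rw [sum_eta_lin h e η.isLinear, h.ηξ]

/-- master lemma 1 : `∑ T(φeᵢ, φeᵢ) = ∑ T(eⱼ,eⱼ) - ∑ ηⱼ T(eⱼ, ξ)`. -/
theorem master1 (h : Hyp φ ξ η) (e : OrthonormalBasis ι ℝ V) {T : V → V → ℝ}
    (hT1 : ∀ w, IsLinearMap ℝ fun v => T v w) (hT2 : ∀ v, IsLinearMap ℝ fun w => T v w) :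
    ∑ i, T (φ (e i)) (φ (e i)) = ∑ j, T (e j) (e j) - ∑ j, η (e j) * T (e j) ξ := by
  have step : ∀ i, T (φ (e i)) (φ (e i)) = ∑ j, ⟪e j, φ (e i)⟫ * T (e j) (φ (e i)) :=
    fun i => lin_expand e (hT1 (φ (e i))) (φ (e i))
  rw [Finset.sum_congr rfl fun i _ => step i, Finset.sum_comm, ← Finset.sum_sub_distrib]
  refine Finset.sum_congr rfl fun j _ => ?_
  have hsk : ∀ i, ⟪e j, φ (e i)⟫ = -⟪e i, φ (e j)⟫ := fun i => by
    rw [real_inner_comm]; exact h.skew _ _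
  have inner : ∀ i, ⟪e j, φ (e i)⟫ * T (e j) (φ (e i)) =
      -(⟪e i, φ (e j)⟫ * T (e j) (φ (e i))) := fun i => by rw [hsk i]; ring
  rw [Finset.sum_congr rfl fun i _ => inner i, Finset.sum_neg_distrib]
  have hexp : T (e j) (φ (φ (e j))) = ∑ i, ⟪e i, φ (e j)⟫ * T (e j) (φ (e i)) :=
    lin_expand e (lin_comp_lin (hT2 (e j)) φ) (φ (e j))
  rw [← hexp, h.φ2 (e j)]
  have h5 : T (e j) (-(e j) + η (e j) • ξ) = T (e j) (-(e j)) + T (e j) (η (e j) • ξ) :=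
    (hT2 (e j)).map_add _ _
  have h6 : T (e j) (η (e j) • ξ) = η (e j) * T (e j) ξ := by
    have := (hT2 (e j)).map_smul (η (e j)) ξ
    simpa using this
  have h7 : T (e j) (-(e j)) = -T (e j) (e j) := (hT2 (e j)).map_neg _
  rw [h5, h6, h7]; ring

/-- master lemma 2 : `∑ T(φeᵢ, eᵢ) = -∑ T(eⱼ, φeⱼ)`. -/
theorem master2 (h : Hyp φ ξ η) (e : OrthonormalBasis ι ℝ V) {T : V → V → ℝ}
    (hT1 : ∀ w, IsLinearMap ℝ fun v => T v w) (hT2 : ∀ v, IsLinearMap ℝ fun w => T v w) :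
    ∑ i, T (φ (e i)) (e i) = -∑ j, T (e j) (φ (e j)) := by
  have step : ∀ i, T (φ (e i)) (e i) = ∑ j, ⟪e j, φ (e i)⟫ * T (e j) (e i) :=
    fun i => lin_expand e (hT1 (e i)) (φ (e i))
  rw [Finset.sum_congr rfl fun i _ => step i, Finset.sum_comm, ← Finset.sum_neg_distrib]
  refine Finset.sum_congr rfl fun j _ => ?_
  have hsk : ∀ i, ⟪e j, φ (e i)⟫ = -⟪e i, φ (e j)⟫ := fun i => by
    rw [real_inner_comm]; exact h.skew _ _
  have inner : ∀ i, ⟪e j, φ (e i)⟫ * T (e j) (e i) =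
      -(⟪e i, φ (e j)⟫ * T (e j) (e i)) := fun i => by rw [hsk i]; ring
  rw [Finset.sum_congr rfl fun i _ => inner i, Finset.sum_neg_distrib]
  have hexp : T (e j) (φ (e j)) = ∑ i, ⟪e i, φ (e j)⟫ * T (e j) (e i) :=
    lin_expand e (hT2 (e j)) (φ (e j))
  rw [← hexp]

/-- basis-change master : `∑ T(bᵢ, bᵢ) = ∑ T(eⱼ, eⱼ)`. -/
theorem master_basis (e : OrthonormalBasis ι ℝ V) {b : ι → V}
    (hb : ∀ w : V, ∑ i, ⟪b i, w⟫ • b i = w) {T : V → V → ℝ}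
    (hT1 : ∀ w, IsLinearMap ℝ fun v => T v w) (hT2 : ∀ v, IsLinearMap ℝ fun w => T v w) :
    ∑ i, T (b i) (b i) = ∑ j, T (e j) (e j) := by
  have step : ∀ i, T (b i) (b i) = ∑ j, ⟪e j, b i⟫ * T (e j) (b i) :=
    fun i => lin_expand e (hT1 (b i)) (b i)
  rw [Finset.sum_congr rfl fun i _ => step i, Finset.sum_comm]
  refine Finset.sum_congr rfl fun j _ => ?_
  have inner : ∀ i, ⟪e j, b i⟫ * T (e j) (b i) = ⟪b i, e j⟫ * T (e j) (b i) :=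
    fun i => by rw [real_inner_comm]
  have hexp : T (e j) (e j) = ∑ i, ⟪b i, e j⟫ * T (e j) (b i) :=
    lin_expand' hb (hT2 (e j)) (e j)
  rw [Finset.sum_congr rfl fun i _ => inner i, ← hexp]

/-- basis-change master with φ : `∑ T(bᵢ, φbᵢ) = ∑ T(eⱼ, φeⱼ)`. -/
theorem master_basis_φ (e : OrthonormalBasis ι ℝ V) (φ : V →ₗ[ℝ] V) {b : ι → V}
    (hb : ∀ w : V, ∑ i, ⟪b i, w⟫ • b i = w) {T : V → V → ℝ}
    (hT1 : ∀ w, IsLinearMap ℝ fun v => T v w) (hT2 : ∀ v, IsLinearMap ℝ fun w => T v w) :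
    ∑ i, T (b i) (φ (b i)) = ∑ j, T (e j) (φ (e j)) := by
  have step : ∀ i, T (b i) (φ (b i)) = ∑ j, ⟪e j, b i⟫ * T (e j) (φ (b i)) :=
    fun i => lin_expand e (hT1 (φ (b i))) (b i)
  rw [Finset.sum_congr rfl fun i _ => step i, Finset.sum_comm]
  refine Finset.sum_congr rfl fun j _ => ?_
  have inner : ∀ i, ⟪e j, b i⟫ * T (e j) (φ (b i)) = ⟪b i, e j⟫ * T (e j) (φ (b i)) :=
    fun i => by rw [real_inner_comm]
  have hexp : T (e j) (φ (e j)) = ∑ i, ⟪b i, e j⟫ * T (e j) (φ (b i)) :=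
    lin_expand' hb (lin_comp_lin (hT2 (e j)) φ) (e j)
  rw [Finset.sum_congr rfl fun i _ => inner i, ← hexp]

/-- first-slot eta contraction for bilinear maps. -/
theorem sum_eta_bil1 (h : Hyp φ ξ η) (e : OrthonormalBasis ι ℝ V) {C : V → V → ℝ}
    (hC : Bil C) (w : V) : ∑ i, η (e i) * C (e i) w = C ξ w :=
  sum_eta_lin h e (hC.1 w)

theorem sum_eta_bil2 (h : Hyp φ ξ η) (e : OrthonormalBasis ι ℝ V) {C : V → V → ℝ}
    (hC : Bil C) (v : V) : ∑ i, η (e i) * C v (e i) = C v ξ :=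
  sum_eta_lin h e (hC.2 v)

/-- The quadrilinear φ-invariance lemma. -/
theorem quad_phi (h : Hyp φ ξ η) (e : OrthonormalBasis ι ℝ V) {C D : V → V → ℝ}
    (hC : Bil C) (hD : Bil D) (hC1 : ∀ z, C ξ z = 0) (hC2 : ∀ x, C x ξ = 0) :
    ∑ i, ∑ k, C (φ (e i)) (φ (e k)) * D (φ (e i)) (φ (e k)) =
    ∑ i, ∑ k, C (e i) (e k) * D (e i) (e k) := by
  have step1 : ∀ k : ι, ∑ i, C (φ (e i)) (φ (e k)) * D (φ (e i)) (φ (e k)) =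
      ∑ j, C (e j) (φ (e k)) * D (e j) (φ (e k)) := by
    intro k
    have := master1 h e (T := fun v w => C v (φ (e k)) * D w (φ (e k)))
      (fun w => lin_mul_const (hC.1 (φ (e k))) _)
      (fun v => const_mul_lin (hD.1 (φ (e k))) _)
    rw [this]
    have hz : ∑ j, η (e j) * (C (e j) (φ (e k)) * D ξ (φ (e k))) =
        C ξ (φ (e k)) * D ξ (φ (e k)) := by
      rw [← sum_eta_bil1 h e hC (φ (e k)), Finset.sum_mul]
      exact Finset.sum_congr rfl fun j _ => by ring
    rw [hz, hC1]
    ring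
  rw [Finset.sum_comm, Finset.sum_congr rfl fun k _ => step1 k, Finset.sum_comm]
  refine Finset.sum_congr rfl fun j _ => ?_
  have := master1 h e (T := fun v w => C (e j) v * D (e j) w)
    (fun w => lin_mul_const (hC.2 (e j)) _)
    (fun v => const_mul_lin (hD.2 (e j)) _)
  rw [this]
  have hz : ∑ l, η (e l) * (C (e j) (e l) * D (e j) ξ) =
      C (e j) ξ * D (e j) ξ := by
    rw [← sum_eta_bil2 h e hC (e j), Finset.sum_mul]
    exact Finset.sum_congr rfl fun l _ => by ring
  rw [hz, hC2]
  ring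

end Aux16
namespace Aux16

variable {V : Type*} [NormedAddCommGroup V] [InnerProductSpace ℝ V]
variable {φ : V →ₗ[ℝ] V} {ξ : V} {η : V →ₗ[ℝ] ℝ}
variable {ι : Type*} [Fintype ι]

theorem innerF_comm (e : OrthonormalBasis ι ℝ V) (F G : V → V → V → ℝ) :
    innerF e F G = innerF e G F := by
  unfold innerF
  exact Finset.sum_congr rfl fun i _ => Finset.sum_congr rfl fun j _ =>
    Finset.sum_congr rfl fun k _ => mul_comm _ _

theorem innerF_GB_GB (h : Hyp φ ξ η) (e : OrthonormalBasis ι ℝ V) {C D : V → V → ℝ}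
    (hC : Bil C) (hD : Bil D) (hC2 : ∀ x, C x ξ = 0) (hD2 : ∀ x, D x ξ = 0) :
    innerF e (GB η C) (GB η D) = 2 * ∑ i, ∑ k, C (e i) (e k) * D (e i) (e k) := by
  unfold innerF GB
  have inner_jk : ∀ i : ι, ∑ j, ∑ k,
      (η (e j) * C (e i) (e k) - η (e k) * C (e i) (e j)) *
      (η (e j) * D (e i) (e k) - η (e k) * D (e i) (e j)) =
      2 * ∑ k, C (e i) (e k) * D (e i) (e k) := by
    intro i
    have hck : ∑ k, η (e k) * C (e i) (e k) = 0 := by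
      rw [sum_eta_bil2 h e hC (e i), hC2]
    have hdk : ∑ k, η (e k) * D (e i) (e k) = 0 := by
      rw [sum_eta_bil2 h e hD (e i), hD2]
    have hstep : ∀ j : ι, ∑ k,
        (η (e j) * C (e i) (e k) - η (e k) * C (e i) (e j)) *
        (η (e j) * D (e i) (e k) - η (e k) * D (e i) (e j)) =
        η (e j) * η (e j) * (∑ k, C (e i) (e k) * D (e i) (e k)) +
          C (e i) (e j) * D (e i) (e j) := by
      intro j
      have expand : ∀ k : ι,
          (η (e j) * C (e i) (e k) - η (e k) * C (e i) (e j)) *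
          (η (e j) * D (e i) (e k) - η (e k) * D (e i) (e j)) =
          η (e j) * η (e j) * (C (e i) (e k) * D (e i) (e k))
          - (η (e j) * D (e i) (e j)) * (η (e k) * C (e i) (e k))
          - (η (e j) * C (e i) (e j)) * (η (e k) * D (e i) (e k))
          + (C (e i) (e j) * D (e i) (e j)) * (η (e k) * η (e k)) := fun k => by ring
      rw [Finset.sum_congr rfl fun k _ => expand k]
      rw [Finset.sum_add_distrib, Finset.sum_sub_distrib, Finset.sum_sub_distrib,
        ← Finset.mul_sum, ← Finset.mul_sum, ← Finset.mul_sum, ← Finset.mul_sum,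
        hck, hdk, sum_eta_sq h e]
      ring
    rw [Finset.sum_congr rfl fun j _ => hstep j, Finset.sum_add_distrib, ← Finset.sum_mul,
      sum_eta_sq h e]
    ring
  rw [Finset.sum_congr rfl fun i _ => inner_jk i, ← Finset.mul_sum]

theorem innerF_GB_GA (h : Hyp φ ξ η) (e : OrthonormalBasis ι ℝ V) {C A : V → V → ℝ}
    (hC : Bil C) (hC1 : ∀ z, C ξ z = 0) :
    innerF e (GB η C) (GA η A) = 0 := by
  unfold innerF GB GA
  rw [Finset.sum_comm]
  refine Finset.sum_eq_zero fun j _ => ?_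
  rw [Finset.sum_comm]
  refine Finset.sum_eq_zero fun k _ => ?_
  have expand : ∀ i : ι,
      (η (e j) * C (e i) (e k) - η (e k) * C (e i) (e j)) * (η (e i) * A (e j) (e k)) =
      A (e j) (e k) * η (e j) * (η (e i) * C (e i) (e k)) -
      A (e j) (e k) * η (e k) * (η (e i) * C (e i) (e j)) := fun i => by ring
  rw [Finset.sum_congr rfl fun i _ => expand i, Finset.sum_sub_distrib,
    ← Finset.mul_sum, ← Finset.mul_sum, sum_eta_bil1 h e hC (e k),
    sum_eta_bil1 h e hC (e j), hC1, hC1]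
  ring

theorem sum_symm_anti (e : OrthonormalBasis ι ℝ V) {C D : V → V → ℝ}
    (hC : ∀ x z : V, C z x = C x z) (hD : ∀ x z : V, D z x = -(D x z)) :
    ∑ i, ∑ k, C (e i) (e k) * D (e i) (e k) = 0 := by
  have h1 : ∑ i, ∑ k, C (e i) (e k) * D (e i) (e k) =
      ∑ i, ∑ k, -(C (e i) (e k) * D (e i) (e k)) := by
    rw [Finset.sum_comm]
    exact Finset.sum_congr rfl fun a _ => Finset.sum_congr rfl fun b _ => by
      rw [hC (e a) (e b), hD (e a) (e b)]; ring
  simp only [Finset.sum_neg_distrib] at h1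
  linarith

theorem fTr_GB (h : Hyp φ ξ η) (e : OrthonormalBasis ι ℝ V) {C : V → V → ℝ}
    (hC2 : ∀ x, C x ξ = 0) : fTr e (GB η C) ξ = -∑ i, C (e i) (e i) := by
  unfold fTr GB
  rw [Finset.sum_congr rfl fun i (_ : i ∈ Finset.univ) =>
    show η (e i) * C (e i) ξ - η ξ * C (e i) (e i) = -(C (e i) (e i)) by
      rw [hC2, h.ηξ]; ring, Finset.sum_neg_distrib]

theorem fTrStar_GB (h : Hyp φ ξ η) (e : OrthonormalBasis ι ℝ V) {C : V → V → ℝ}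
    (hC2 : ∀ x, C x ξ = 0) : fTrStar φ e (GB η C) ξ = -∑ i, C (e i) (φ (e i)) := by
  unfold fTrStar GB
  rw [Finset.sum_congr rfl fun i (_ : i ∈ Finset.univ) =>
    show η (φ (e i)) * C (e i) ξ - η ξ * C (e i) (φ (e i)) = -(C (e i) (φ (e i))) by
      rw [hC2, h.ηξ, h.ηφ]; ring, Finset.sum_neg_distrib]

/-- trace of an antisymmetric bilinear form vanishes. -/
theorem tr_anti {C : V → V → ℝ} (hC : ∀ x z : V, C z x = -(C x z)) (e : OrthonormalBasis ι ℝ V) :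
    ∑ i, C (e i) (e i) = 0 :=
  Finset.sum_eq_zero fun i _ => by have := hC (e i) (e i); linarith

/-- star-trace of a symmetric bilinear form vanishes. -/
theorem trstar_symm (h : Hyp φ ξ η) (e : OrthonormalBasis ι ℝ V) {C : V → V → ℝ}
    (hB : Bil C) (hC : ∀ x z : V, C z x = C x z) :
    ∑ i, C (e i) (φ (e i)) = 0 := by
  have h1 := master2 h e hB.1 hB.2
  have h2 : ∑ i, C (φ (e i)) (e i) = ∑ i, C (e i) (φ (e i)) :=
    Finset.sum_congr rfl fun i _ => (hC (φ (e i)) (e i)).symm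
  rw [h2] at h1
  linarith

/-- trace of a φ-anti-invariant bilinear form vanishes. -/
theorem tr_phi_anti (h : Hyp φ ξ η) (e : OrthonormalBasis ι ℝ V) {C : V → V → ℝ}
    (hB : Bil C) (hC2 : ∀ x, C x ξ = 0)
    (hφC : ∀ x z, C (φ x) (φ z) = -(C x z)) :
    ∑ i, C (e i) (e i) = 0 := by
  have h1 := master1 h e hB.1 hB.2
  have h2 : ∑ i, C (φ (e i)) (φ (e i)) = ∑ i, -(C (e i) (e i)) :=
    Finset.sum_congr rfl fun i _ => hφC (e i) (e i)
  have h3 : ∑ j, η (e j) * C (e j) ξ = 0 :=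
    Finset.sum_eq_zero fun j _ => by rw [hC2]; ring
  rw [h2, Finset.sum_neg_distrib, h3] at h1
  linarith

/-- star-trace of a φ-anti-invariant bilinear form vanishes. -/
theorem trstar_phi_anti (h : Hyp φ ξ η) (e : OrthonormalBasis ι ℝ V) {C : V → V → ℝ}
    (hB : Bil C) (hC2 : ∀ x, C x ξ = 0)
    (hφC : ∀ x z, C (φ x) (φ z) = -(C x z)) :
    ∑ i, C (e i) (φ (e i)) = 0 := by
  -- C(φx, e_i)-relation : C(φ e_i, e_i) = C(e_i, φ e_i)
  have key : ∀ x : V, C (φ x) (x) = C x (φ x) := by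
    intro x
    have h1 : C (φ x) (φ (φ x)) = -(C x (φ x)) := hφC x (φ x)
    rw [h.φ2 x] at h1
    have h2 : C (φ x) (-x + η x • ξ) = C (φ x) (-x) + C (φ x) (η x • ξ) :=
      (hB.2 (φ x)).map_add _ _
    have h3 : C (φ x) (-x) = -C (φ x) x := (hB.2 (φ x)).map_neg _
    have h4 : C (φ x) (η x • ξ) = η x * C (φ x) ξ := by
      have := (hB.2 (φ x)).map_smul (η x) ξ; simpa using this
    rw [h2, h3, h4, hC2] at h1
    linarith
  have h1 := master2 h e hB.1 hB.2
  have h2 : ∑ i, C (φ (e i)) (e i) = ∑ i, C (e i) (φ (e i)) :=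
    Finset.sum_congr rfl fun i _ => key (e i)
  rw [h2] at h1
  linarith

end Aux16
namespace Aux16

variable {V : Type*} [NormedAddCommGroup V] [InnerProductSpace ℝ V]
variable {φ : V →ₗ[ℝ] V} {ξ : V} {η : V →ₗ[ℝ] ℝ}
variable {ι : Type*} [Fintype ι]

/-- data of a B-form representation. -/
structure BData (φ : V →ₗ[ℝ] V) (ξ : V) (η : V →ₗ[ℝ] ℝ) (G : V → V → V → ℝ)
    (C : V → V → ℝ) : Prop where
  rep : ∀ x y z, G x y z = η y * C x z - η z * C x y
  bil : Bil C
  z1 : ∀ z, C ξ z = 0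
  z2 : ∀ x, C x ξ = 0

theorem BData.Gxz {G C} (hD : BData φ ξ η G C) (h : Hyp φ ξ η) :
    ∀ x z, G x ξ z = C x z := by
  intro x z; rw [hD.rep, h.ηξ, hD.z2]; ring

theorem BData.row {G C} (hD : BData φ ξ η G C) : ∀ y z, G ξ y z = 0 := by
  intro y z; rw [hD.rep, hD.z1, hD.z1]; ring

theorem BData.funeq {G C} (hD : BData φ ξ η G C) : G = GB η C :=
  funext fun x => funext fun y => funext fun z => hD.rep x y z

theorem bdata_of_memVF' (h : Hyp φ ξ η) {G} (hM : MemVF' φ ξ η G) :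
    BData φ ξ η G (fun x z => G x ξ z) where
  rep := memVF'_decomp h hM
  bil := ⟨fun z => hM.1.1.1 ξ z, fun x => hM.1.1.2.2 x ξ⟩
  z1 := fun z => hM.2.2 ξ z
  z2 := fun x => by have := hM.1.2.1 x ξ ξ; linarith

theorem sign_F4 (h : Hyp φ ξ η) {G} (hT : Trilinear G) (hE : G = F4 φ ξ η G) :
    ∀ x z, G (φ x) ξ (φ z) = G x ξ z := by
  intro x z
  have h0 : G (φ x) ξ (0 : V) = 0 := (hT.2.2 (φ x) ξ).map_zero
  have h1 := congrFun (congrFun (congrFun hE x) ξ) z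
  simp only [F4] at h1
  rw [h.ηξ, h.φξ, h0] at h1
  linarith

theorem sign_F4' (h : Hyp φ ξ η) {G} (hT : Trilinear G) (hE : G = -F4 φ ξ η G) :
    ∀ x z, G (φ x) ξ (φ z) = -(G x ξ z) := by
  intro x z
  have h0 : G (φ x) ξ (0 : V) = 0 := (hT.2.2 (φ x) ξ).map_zero
  have h1 := congrFun (congrFun (congrFun hE x) ξ) z
  simp only [Pi.neg_apply, F4] at h1
  rw [h.ηξ, h.φξ, h0] at h1
  linarith

theorem sign_F5 (h : Hyp φ ξ η) {G} (hrow : ∀ y z, G ξ y z = 0) (hE : G = F5 ξ η G) :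
    ∀ x z, G z ξ x = G x ξ z := by
  intro x z
  have h1 := congrFun (congrFun (congrFun hE x) ξ) z
  simp only [F5] at h1
  rw [h.ηξ, hrow ξ x] at h1
  linarith

theorem sign_F5' (h : Hyp φ ξ η) {G} (hrow : ∀ y z, G ξ y z = 0) (hE : G = -F5 ξ η G) :
    ∀ x z, G z ξ x = -(G x ξ z) := by
  intro x z
  have h1 := congrFun (congrFun (congrFun hE x) ξ) z
  simp only [Pi.neg_apply, F5] at h1
  rw [h.ηξ, hrow ξ x] at h1
  linarith

/-- the bilinear form `g_h(x,z) = ⟪x,z⟫ - η(x)η(z)`. -/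
def ghB (η : V →ₗ[ℝ] ℝ) : V → V → ℝ := fun x z => ⟪x, z⟫ - η x * η z

/-- the bilinear form `ω(x,z) = ⟪x, φz⟫`. -/
def omB (φ : V →ₗ[ℝ] V) : V → V → ℝ := fun x z => ⟪x, φ z⟫

theorem bil_gh : Bil (ghB η) := by
  constructor <;> intro w <;> constructor <;> intro a b <;>
    simp only [ghB, inner_add_left, inner_add_right, real_inner_smul_left,
      real_inner_smul_right, map_add, map_smul, smul_eq_mul] <;> ring

theorem bil_om : Bil (omB φ) := by
  constructor <;> intro w <;> constructor <;> intro a b <;>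
    simp only [omB, inner_add_left, inner_add_right, real_inner_smul_left,
      real_inner_smul_right, map_add, map_smul, smul_eq_mul] <;> ring

theorem gh_z1 (h : Hyp φ ξ η) (z : V) : ghB η ξ z = 0 := by
  simp only [ghB, h.ip' z, h.ηξ]; ring

theorem gh_z2 (h : Hyp φ ξ η) (x : V) : ghB η x ξ = 0 := by
  simp only [ghB, h.ip x, h.ηξ]; ring

theorem gh_phi (h : Hyp φ ξ η) (x z : V) : ghB η (φ x) (φ z) = ghB η x z := by
  simp only [ghB, h.met x z, h.ηφ]; ring

theorem gh_symm (x z : V) : ghB η z x = ghB η x z := by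
  simp only [ghB, real_inner_comm z x]; ring

theorem om_z1 (h : Hyp φ ξ η) (z : V) : omB φ ξ z = 0 := by
  simp only [omB, h.ip' (φ z), h.ηφ]

theorem om_z2 (h : Hyp φ ξ η) (x : V) : omB φ x ξ = 0 := by
  simp only [omB, h.φξ, inner_zero_right]

theorem om_phi (h : Hyp φ ξ η) (x z : V) : omB φ (φ x) (φ z) = omB φ x z := by
  simp only [omB, h.met x (φ z), h.ηφ]; ring

theorem om_anti (h : Hyp φ ξ η) (x z : V) : omB φ z x = -(omB φ x z) := by
  simp only [omB]
  rw [real_inner_comm (φ x) z, h.skew x z]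

/-- component evaluation for B-forms. -/
theorem comp_B (h : Hyp φ ξ η) {G C} (hD : BData φ ξ η G C) {δ ε : ℝ}
    (hφC : ∀ x z, C (φ x) (φ z) = δ * C x z) (htC : ∀ x z, C z x = ε * C x z) :
    (∀ x y z, F1 ξ η G x y z = 0) ∧
    (∀ x y z, F2 ξ η G x y z = G x y z) ∧
    (∀ x y z, F3 ξ η G x y z = 0) ∧
    (∀ x y z, F4 φ ξ η G x y z = δ * G x y z) ∧
    (∀ x y z, F5 ξ η G x y z = ε * G x y z) ∧
    (∀ x y z, F6 φ ξ η G x y z = δ * ε * G x y z) := by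
  have hxz := hD.Gxz h
  have hrow := hD.row
  refine ⟨fun x y z => ?_, fun x y z => ?_, fun x y z => ?_, fun x y z => ?_,
    fun x y z => ?_, fun x y z => ?_⟩
  · show η x * G ξ y z = 0
    rw [hrow]; ring
  · show η y * G x ξ z - η z * G x ξ y = G x y z
    rw [hxz, hxz, hD.rep x y z]
  · show η x * η y * G ξ ξ z - η x * η z * G ξ ξ y = 0
    rw [hrow, hrow]; ring
  · show η y * G (φ x) ξ (φ z) - η z * G (φ x) ξ (φ y) = δ * G x y z
    rw [hxz, hxz, hφC x z, hφC x y, hD.rep x y z]; ring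
  · show η y * G z ξ x - η z * G y ξ x = ε * G x y z
    rw [hxz, hxz, htC x z, htC x y, hD.rep x y z]; ring
  · show η y * G (φ z) ξ (φ x) - η z * G (φ y) ξ (φ x) = δ * ε * G x y z
    rw [hxz, hxz, hφC z x, hφC y x, htC x z, htC x y, hD.rep x y z]; ring

theorem fTr_B (h : Hyp φ ξ η) (e : OrthonormalBasis ι ℝ V) {G C}
    (hD : BData φ ξ η G C) : fTr e G ξ = -∑ i, C (e i) (e i) := by
  unfold fTr
  rw [Finset.sum_congr rfl fun i (_ : i ∈ Finset.univ) =>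
    show G (e i) (e i) ξ = -(C (e i) (e i)) by
      rw [hD.rep, hD.z2, h.ηξ]; ring, Finset.sum_neg_distrib]

theorem fTrStar_B (h : Hyp φ ξ η) (e : OrthonormalBasis ι ℝ V) {G C}
    (hD : BData φ ξ η G C) : fTrStar φ e G ξ = -∑ i, C (e i) (φ (e i)) := by
  unfold fTrStar
  rw [Finset.sum_congr rfl fun i (_ : i ∈ Finset.univ) =>
    show G (e i) (φ (e i)) ξ = -(C (e i) (φ (e i))) by
      rw [hD.rep, hD.z2, h.ηξ, h.ηφ]; ring, Finset.sum_neg_distrib]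

end Aux16
namespace Aux16

variable {V : Type*} [NormedAddCommGroup V] [InnerProductSpace ℝ V]
variable {φ : V →ₗ[ℝ] V} {ξ : V} {η : V →ₗ[ℝ] ℝ}
variable {ι : Type*} [Fintype ι]

theorem bil_scal {C : V → V → ℝ} (hC : Bil C) (a : ℝ) : Bil fun x z => a * C x z := by
  obtain ⟨h1, h2, h3, h4⟩ := bil_aux hC
  constructor <;> intro w <;> constructor <;> intro s t <;>
    simp only [h1, h2, h3, h4, smul_eq_mul] <;> ring

theorem F7_of_tr0 {n : ℕ} {e : OrthonormalBasis ι ℝ V} {G : V → V → V → ℝ}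
    (hf : fTr e G ξ = 0) : ∀ x y z : V, F7 n e ξ η G x y z = 0 * G x y z := by
  intro x y z; simp only [F7, hf]; ring

theorem F8_of_tr0 {n : ℕ} {e : OrthonormalBasis ι ℝ V} {G : V → V → V → ℝ}
    (hf : fTrStar φ e G ξ = 0) : ∀ x y z : V, F8 n φ e ξ η G x y z = 0 * G x y z := by
  intro x y z; simp only [F8, hf]; ring

/-- full package for a B-type element. -/
structure Pack (n : ℕ) (φ : V →ₗ[ℝ] V) (ξ : V) (η : V →ₗ[ℝ] ℝ)
    (e : OrthonormalBasis ι ℝ V) (G : V → V → V → ℝ) (C : V → V → ℝ)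
    (δ ε c7 c8 : ℝ) : Prop where
  bd : BData φ ξ η G C
  hφ : ∀ x z, C (φ x) (φ z) = δ * C x z
  ht : ∀ x z, C z x = ε * C x z
  h7 : ∀ x y z, F7 n e ξ η G x y z = c7 * G x y z
  h8 : ∀ x y z, F8 n φ e ξ η G x y z = c8 * G x y z

theorem pack0 (h : Hyp φ ξ η) {n : ℕ} {e : OrthonormalBasis ι ℝ V} {G}
    (hG : MemF2sub n e φ ξ η G) :
    Pack n φ ξ η e G (fun x z => -(1 / (2 * (n : ℝ)) * fTr e G ξ) * ghB η x z) 1 1 1 0 := by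
  have hbd : BData φ ξ η G (fun x z => -(1 / (2 * (n : ℝ)) * fTr e G ξ) * ghB η x z) := by
    refine ⟨fun x y z => ?_, bil_scal bil_gh _, fun z => by rw [gh_z1 h]; ring,
      fun x => by rw [gh_z2 h]; ring⟩
    rw [congrFun (congrFun (congrFun hG.2 x) y) z]
    simp only [F7, ghB]; ring
  refine ⟨hbd, fun x z => by rw [gh_phi h]; ring, fun x z => by rw [gh_symm]; ring,
    fun x y z => by rw [← congrFun (congrFun (congrFun hG.2 x) y) z]; ring, ?_⟩
  have hsym : ∀ x z : V, (fun x z => -(1 / (2 * (n : ℝ)) * fTr e G ξ) * ghB η x z) z x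
      = (fun x z => -(1 / (2 * (n : ℝ)) * fTr e G ξ) * ghB η x z) x z :=
    fun x z => by simp only; rw [gh_symm]
  have h0 : fTrStar φ e G ξ = 0 := by
    rw [fTrStar_B h e hbd, trstar_symm h e (bil_scal bil_gh _) hsym, neg_zero]
  exact F8_of_tr0 h0

theorem pack1 (h : Hyp φ ξ η) {n : ℕ} {e : OrthonormalBasis ι ℝ V} {G}
    (hG : MemF3sub n e φ ξ η G) :
    Pack n φ ξ η e G (fun x z => (1 / (2 * (n : ℝ)) * fTrStar φ e G ξ) * omB φ x z) 1 (-1) 0 1 := by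
  have hbd : BData φ ξ η G (fun x z => (1 / (2 * (n : ℝ)) * fTrStar φ e G ξ) * omB φ x z) := by
    refine ⟨fun x y z => ?_, bil_scal bil_om _, fun z => by rw [om_z1 h]; ring,
      fun x => by rw [om_z2 h]; ring⟩
    rw [congrFun (congrFun (congrFun hG.2 x) y) z]
    simp only [F8, omB]; ring
  refine ⟨hbd, fun x z => by rw [om_phi h]; ring, fun x z => by rw [om_anti h]; ring, ?_,
    fun x y z => by rw [← congrFun (congrFun (congrFun hG.2 x) y) z]; ring⟩
  have hanti : ∀ x z : V, (fun x z => (1 / (2 * (n : ℝ)) * fTrStar φ e G ξ) * omB φ x z) z x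
      = -((fun x z => (1 / (2 * (n : ℝ)) * fTrStar φ e G ξ) * omB φ x z) x z) :=
    fun x z => by simp only; rw [om_anti h]; ring
  have h0 : fTr e G ξ = 0 := by
    rw [fTr_B h e hbd, tr_anti hanti e, neg_zero]
  exact F7_of_tr0 h0

theorem pack2 (h : Hyp φ ξ η) {n : ℕ} {e : OrthonormalBasis ι ℝ V} {G}
    (hG : MemF4sub' n e φ ξ η G) :
    Pack n φ ξ η e G (fun x z => G x ξ z) 1 1 0 0 := by
  have hbd := bdata_of_memVF' h hG.1
  have hφ4 := sign_F4 h hG.1.1.1 hG.2.1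
  have ht5 := sign_F5 h hG.1.2.2 hG.2.2.1
  have hsym : ∀ x z : V, G z ξ x = G x ξ z := ht5
  refine ⟨hbd, fun x z => by rw [hφ4]; ring, fun x z => by rw [ht5]; ring,
    F7_of_tr0 hG.2.2.2, ?_⟩
  have h0 : fTrStar φ e G ξ = 0 := by
    rw [fTrStar_B h e hbd, trstar_symm h e hbd.bil hsym, neg_zero]
  exact F8_of_tr0 h0

theorem pack3 (h : Hyp φ ξ η) {n : ℕ} {e : OrthonormalBasis ι ℝ V} {G}
    (hG : MemF5sub' n e φ ξ η G) :
    Pack n φ ξ η e G (fun x z => G x ξ z) 1 (-1) 0 0 := by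
  have hbd := bdata_of_memVF' h hG.1
  have hφ4 := sign_F4 h hG.1.1.1 hG.2.1
  have ht5 := sign_F5' h hG.1.2.2 hG.2.2.1
  refine ⟨hbd, fun x z => by rw [hφ4]; ring, fun x z => by rw [ht5]; ring, ?_,
    F8_of_tr0 hG.2.2.2⟩
  have h0 : fTr e G ξ = 0 := by
    rw [fTr_B h e hbd, tr_anti (fun x z => ht5 x z) e, neg_zero]
  exact F7_of_tr0 h0

theorem pack4 (h : Hyp φ ξ η) {n : ℕ} {e : OrthonormalBasis ι ℝ V} {G}
    (hG : MemF6sub φ ξ η G) :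
    Pack n φ ξ η e G (fun x z => G x ξ z) (-1) 1 0 0 := by
  have hbd := bdata_of_memVF' h hG.1
  have hφ4 := sign_F4' h hG.1.1.1 hG.2.1
  have ht5 := sign_F5 h hG.1.2.2 hG.2.2
  refine ⟨hbd, fun x z => by rw [hφ4]; ring, fun x z => by rw [ht5]; ring, ?_, ?_⟩
  · have h0 : fTr e G ξ = 0 := by
      rw [fTr_B h e hbd, tr_phi_anti h e hbd.bil hbd.z2 (fun x z => hφ4 x z), neg_zero]
    exact F7_of_tr0 h0
  · have h0 : fTrStar φ e G ξ = 0 := by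
      rw [fTrStar_B h e hbd, trstar_symm h e hbd.bil ht5, neg_zero]
    exact F8_of_tr0 h0

theorem pack5 (h : Hyp φ ξ η) {n : ℕ} {e : OrthonormalBasis ι ℝ V} {G}
    (hG : MemF7sub φ ξ η G) :
    Pack n φ ξ η e G (fun x z => G x ξ z) (-1) (-1) 0 0 := by
  have hbd := bdata_of_memVF' h hG.1
  have hφ4 := sign_F4' h hG.1.1.1 hG.2.1
  have ht5 := sign_F5' h hG.1.2.2 hG.2.2
  refine ⟨hbd, fun x z => by rw [hφ4]; ring, fun x z => by rw [ht5]; ring, ?_, ?_⟩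
  · have h0 : fTr e G ξ = 0 := by
      rw [fTr_B h e hbd, tr_anti (fun x z => ht5 x z) e, neg_zero]
    exact F7_of_tr0 h0
  · have h0 : fTrStar φ e G ξ = 0 := by
      rw [fTrStar_B h e hbd, trstar_phi_anti h e hbd.bil hbd.z2 (fun x z => hφ4 x z), neg_zero]
    exact F8_of_tr0 h0

/-- p16-component table for B-type elements. -/
theorem p16_eval {n : ℕ} {e : OrthonormalBasis ι ℝ V} {G C} {δ ε c7 c8 : ℝ}
    (h : Hyp φ ξ η) (hP : Pack n φ ξ η e G C δ ε c7 c8) (x y z : V) :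
      (p16 n e φ ξ η G 0 x y z = c7 * G x y z) ∧
      (p16 n e φ ξ η G 1 x y z = c8 * G x y z) ∧
      (p16 n e φ ξ η G 2 x y z = ((1+δ+ε+δ*ε)/4 - c7) * G x y z) ∧
      (p16 n e φ ξ η G 3 x y z = ((1+δ-ε-δ*ε)/4 - c8) * G x y z) ∧
      (p16 n e φ ξ η G 4 x y z = ((1-δ+ε-δ*ε)/4) * G x y z) ∧
      (p16 n e φ ξ η G 5 x y z = ((1-δ-ε+δ*ε)/4) * G x y z) ∧
      (p16 n e φ ξ η G 6 x y z = 0 * G x y z) := by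
  obtain ⟨h1, h2, h3, h4, h5, h6⟩ := comp_B h hP.bd hP.hφ hP.ht
  refine ⟨hP.h7 x y z, hP.h8 x y z, ?_, ?_, ?_, ?_, ?_⟩
  · show (1/4) * (F2 ξ η G x y z + F4 φ ξ η G x y z + F5 ξ η G x y z + F6 φ ξ η G x y z
      - 4 * F7 n e ξ η G x y z - F3 ξ η G x y z) = _
    rw [h2, h3, h4, h5, h6, hP.h7]; ring
  · show (1/4) * (F2 ξ η G x y z + F4 φ ξ η G x y z - F5 ξ η G x y z - F6 φ ξ η G x y z
      - 4 * F8 n φ e ξ η G x y z - F3 ξ η G x y z) = _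
    rw [h2, h3, h4, h5, h6, hP.h8]; ring
  · show (1/4) * (F2 ξ η G x y z - F4 φ ξ η G x y z + F5 ξ η G x y z - F6 φ ξ η G x y z
      - F3 ξ η G x y z) = _
    rw [h2, h3, h4, h5, h6]; ring
  · show (1/4) * (F2 ξ η G x y z - F4 φ ξ η G x y z - F5 ξ η G x y z + F6 φ ξ η G x y z
      - F3 ξ η G x y z) = _
    rw [h2, h3, h4, h5, h6]; ring
  · show F1 ξ η G x y z - F3 ξ η G x y z = _
    rw [h1, h3]; ring

/-- p16-component table for 𝔽₈-elements. -/
theorem p16_eval_A {n : ℕ} {e : OrthonormalBasis ι ℝ V} {G}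
    (h : Hyp φ ξ η) (hG : MemF8sub φ ξ η G) (x y z : V) :
      (p16 n e φ ξ η G 0 x y z = 0) ∧
      (p16 n e φ ξ η G 1 x y z = 0) ∧
      (p16 n e φ ξ η G 2 x y z = 0) ∧
      (p16 n e φ ξ η G 3 x y z = 0) ∧
      (p16 n e φ ξ η G 4 x y z = 0) ∧
      (p16 n e φ ξ η G 5 x y z = 0) ∧
      (p16 n e φ ξ η G 6 x y z = G x y z) := by
  have hmid : ∀ x z : V, G x ξ z = 0 := fun x z => by
    have := hG.1.2.1 x ξ z; rw [hG.2.2 x z] at this; linarith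
  have hrow2 : ∀ z : V, G ξ ξ z = 0 := fun z => hmid ξ z
  have hf : fTr e G ξ = 0 := Finset.sum_eq_zero fun i _ => hG.2.2 _ _
  have hfs : fTrStar φ e G ξ = 0 := Finset.sum_eq_zero fun i _ => hG.2.2 _ _
  refine ⟨?_, ?_, ?_, ?_, ?_, ?_, ?_⟩
  · show (1 / (2 * (n:ℝ))) * fTr e G ξ * (η z * ⟪x, y⟫ - η y * ⟪x, z⟫) = 0
    rw [hf]; ring
  · show -(1 / (2 * (n:ℝ))) * fTrStar φ e G ξ * (η z * ⟪x, φ y⟫ - η y * ⟪x, φ z⟫) = 0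
    rw [hfs]; ring
  · show (1/4) * (F2 ξ η G x y z + F4 φ ξ η G x y z + F5 ξ η G x y z + F6 φ ξ η G x y z
      - 4 * F7 n e ξ η G x y z - F3 ξ η G x y z) = 0
    simp only [F2, F3, F4, F5, F6, F7, hmid, hrow2, hf]; ring
  · show (1/4) * (F2 ξ η G x y z + F4 φ ξ η G x y z - F5 ξ η G x y z - F6 φ ξ η G x y z
      - 4 * F8 n φ e ξ η G x y z - F3 ξ η G x y z) = 0
    simp only [F2, F3, F4, F5, F6, F8, hmid, hrow2, hfs]; ring
  · show (1/4) * (F2 ξ η G x y z - F4 φ ξ η G x y z + F5 ξ η G x y z - F6 φ ξ η G x y z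
      - F3 ξ η G x y z) = 0
    simp only [F2, F3, F4, F5, F6, hmid, hrow2]; ring
  · show (1/4) * (F2 ξ η G x y z - F4 φ ξ η G x y z - F5 ξ η G x y z + F6 φ ξ η G x y z
      - F3 ξ η G x y z) = 0
    simp only [F2, F3, F4, F5, F6, hmid, hrow2]; ring
  · show F1 ξ η G x y z - F3 ξ η G x y z = G x y z
    have := memF8_decomp h hG x y z
    simp only [F1, F3, hrow2]
    linarith

end Aux16
namespace Aux16

variable {V : Type*} [NormedAddCommGroup V] [InnerProductSpace ℝ V]
variable {φ : V →ₗ[ℝ] V} {ξ : V} {η : V →ₗ[ℝ] ℝ}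

theorem sum_inner_self {m : ℕ} (e : OrthonormalBasis (Fin m) ℝ V) :
    ∑ i, ⟪e i, e i⟫ = (m : ℝ) := by
  rw [Finset.sum_congr rfl fun i (_ : i ∈ Finset.univ) => show ⟪e i, e i⟫ = (1:ℝ) from by
    rw [real_inner_self_eq_norm_mul_norm, e.orthonormal.1 i]; norm_num]
  simp

theorem sum_gh_diag (h : Hyp φ ξ η) {n : ℕ} (e : OrthonormalBasis (Fin (2*n+1)) ℝ V) :
    ∑ i, ghB η (e i) (e i) = 2*(n:ℝ) := by
  unfold ghB
  rw [Finset.sum_sub_distrib, sum_inner_self e, sum_eta_sq h e]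
  push_cast; ring

theorem sum_om_star (h : Hyp φ ξ η) {n : ℕ} (e : OrthonormalBasis (Fin (2*n+1)) ℝ V) :
    ∑ i, omB φ (e i) (φ (e i)) = -(2*(n:ℝ)) := by
  have step : ∀ i, omB φ (e i) (φ (e i)) = -⟪e i, e i⟫ + η (e i) * η (e i) := by
    intro i
    show ⟪e i, φ (φ (e i))⟫ = _
    rw [h.φ2 (e i), inner_add_right, inner_neg_right, real_inner_smul_right, h.ip]
  rw [Finset.sum_congr rfl fun i _ => step i, Finset.sum_add_distrib,
    Finset.sum_neg_distrib, sum_inner_self e, sum_eta_sq h e]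
  push_cast; ring

/-- Existence part. -/
theorem part1 (h : Hyp φ ξ η) {n : ℕ} (hn : 1 ≤ n) (e : OrthonormalBasis (Fin (2*n+1)) ℝ V)
    {F} (hM : MemVF φ ξ η F) :
    (∀ i, P16 n e φ ξ η i (p16 n e φ ξ η F i)) ∧
    ∀ x y z, F x y z = ∑ i : Fin 7, p16 n e φ ξ η F i x y z := by
  have hT := hM.1.1
  have hanti := hM.1.2.1
  have hthird := hM.1.2.2
  have hω := hM.2.2
  have hxi : ∀ x, F x ξ ξ = 0 := fun x => by have := hanti x ξ ξ; linarith
  have h2n : (2*(n:ℝ)) ≠ 0 := by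
    have : (1:ℝ) ≤ (n:ℝ) := by exact_mod_cast hn
    linarith
  have f1a : ∀ (a b y z : V), F (a+b) y z = F a y z + F b y z :=
    fun a b y z => (hT.1 y z).map_add a b
  have f1s : ∀ (c:ℝ) (a y z : V), F (c•a) y z = c * F a y z :=
    fun c a y z => (hT.1 y z).map_smul c a
  have f1n : ∀ (a y z : V), F (-a) y z = -F a y z := fun a y z => (hT.1 y z).map_neg a
  have f1z : ∀ (y z : V), F 0 y z = 0 := fun y z => (hT.1 y z).map_zero
  have f3a : ∀ (x y a b : V), F x y (a+b) = F x y a + F x y b :=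
    fun x y a b => (hT.2.2 x y).map_add a b
  have f3s : ∀ (c:ℝ) (x y a : V), F x y (c•a) = c * F x y a :=
    fun c x y a => (hT.2.2 x y).map_smul c a
  have f3n : ∀ (x y a : V), F x y (-a) = -F x y a := fun x y a => (hT.2.2 x y).map_neg a
  have f3z : ∀ (x y : V), F x y 0 = 0 := fun x y => (hT.2.2 x y).map_zero
  have key : ∀ a b : V, F (φ (φ a)) ξ (φ (φ b)) = F a ξ b := by
    intro a b
    rw [h.φ2 a, h.φ2 b]
    simp only [f1a, f1n, f1s, f3a, f3n, f3s, hω, hxi]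
    ring
  -- traces
  have trB : ∑ i, F (e i) ξ (e i) = -fTr e F ξ := by
    unfold fTr
    rw [Finset.sum_congr rfl fun i (_ : i ∈ Finset.univ) => hanti (e i) ξ (e i),
      Finset.sum_neg_distrib]
  have trBφ : ∑ i, F (φ (e i)) ξ (φ (e i)) = -fTr e F ξ := by
    have hm := master1 h e (T := fun v w => F v ξ w) (fun w => hT.1 ξ w) (fun v => hT.2.2 v ξ)
    have hz : ∑ j, η (e j) * F (e j) ξ ξ = 0 :=
      Finset.sum_eq_zero fun j _ => by rw [hxi]; ring
    rw [hm, hz, trB]; ring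
  have trsB : ∑ i, F (e i) ξ (φ (e i)) = -fTrStar φ e F ξ := by
    unfold fTrStar
    rw [Finset.sum_congr rfl fun i (_ : i ∈ Finset.univ) => hanti (e i) ξ (φ (e i)),
      Finset.sum_neg_distrib]
  have trsBt : ∑ i, F (φ (e i)) ξ (e i) = fTrStar φ e F ξ := by
    have hm := master2 h e (T := fun v w => F v ξ w) (fun w => hT.1 ξ w) (fun v => hT.2.2 v ξ)
    rw [hm, trsB]; ring
  have trsBφ : ∑ i, F (φ (e i)) ξ (φ (φ (e i))) = -fTrStar φ e F ξ := by
    have step : ∀ i, F (φ (e i)) ξ (φ (φ (e i))) = -F (φ (e i)) ξ (e i) := by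
      intro i; rw [h.φ2 (e i)]
      simp only [f3a, f3n, f3s, hxi]; ring
    rw [Finset.sum_congr rfl fun i _ => step i, Finset.sum_neg_distrib, trsBt]
  have trsBφt : ∑ i, F (φ (φ (e i))) ξ (φ (e i)) = fTrStar φ e F ξ := by
    have step : ∀ i, F (φ (φ (e i))) ξ (φ (e i)) = -F (e i) ξ (φ (e i)) := by
      intro i; rw [h.φ2 (e i)]
      simp only [f1a, f1n, f1s, hω]; ring
    rw [Finset.sum_congr rfl fun i _ => step i, Finset.sum_neg_distrib, trsB]; ring
  ---- space 0
  have hfun0 : F7 n e ξ η F = GB η (fun x z => -(1/(2*(n:ℝ)) * fTr e F ξ) * ghB η x z) := by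
    funext x y z
    show (1/(2*(n:ℝ))) * fTr e F ξ * (η z * ⟪x,y⟫ - η y * ⟪x,z⟫) = _
    simp only [GB, ghB]; ring
  have hz10 : ∀ z, (fun x z : V => -(1/(2*(n:ℝ)) * fTr e F ξ) * ghB η x z) ξ z = 0 :=
    fun z => by show -(1/(2*(n:ℝ)) * fTr e F ξ) * ghB η ξ z = 0; rw [gh_z1 h]; ring
  have hz20 : ∀ x, (fun x z : V => -(1/(2*(n:ℝ)) * fTr e F ξ) * ghB η x z) x ξ = 0 :=
    fun x => by show -(1/(2*(n:ℝ)) * fTr e F ξ) * ghB η x ξ = 0; rw [gh_z2 h]; ring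
  have hmem0 := memVF'_GB h (bil_scal bil_gh (-(1/(2*(n:ℝ)) * fTr e F ξ))) hz10 hz20
  have htr0 : fTr e (F7 n e ξ η F) ξ = fTr e F ξ := by
    rw [hfun0, fTr_GB h e hz20, ← Finset.mul_sum, sum_gh_diag h e]
    field_simp
  have hP0 : MemF2sub n e φ ξ η (F7 n e ξ η F) := by
    refine ⟨?_, ?_⟩
    · rw [hfun0]; exact hmem0.1
    · funext x y z
      show (1/(2*(n:ℝ))) * fTr e F ξ * (η z * ⟪x,y⟫ - η y * ⟪x,z⟫)
          = (1/(2*(n:ℝ))) * fTr e (F7 n e ξ η F) ξ * (η z * ⟪x,y⟫ - η y * ⟪x,z⟫)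
      rw [htr0]
  ---- space 1
  have hfun1 : F8 n φ e ξ η F
      = GB η (fun x z => (1/(2*(n:ℝ)) * fTrStar φ e F ξ) * omB φ x z) := by
    funext x y z
    show -(1/(2*(n:ℝ))) * fTrStar φ e F ξ * (η z * ⟪x, φ y⟫ - η y * ⟪x, φ z⟫) = _
    simp only [GB, omB]; ring
  have hz11 : ∀ z, (fun x z : V => (1/(2*(n:ℝ)) * fTrStar φ e F ξ) * omB φ x z) ξ z = 0 :=
    fun z => by show (1/(2*(n:ℝ)) * fTrStar φ e F ξ) * omB φ ξ z = 0; rw [om_z1 h]; ring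
  have hz21 : ∀ x, (fun x z : V => (1/(2*(n:ℝ)) * fTrStar φ e F ξ) * omB φ x z) x ξ = 0 :=
    fun x => by show (1/(2*(n:ℝ)) * fTrStar φ e F ξ) * omB φ x ξ = 0; rw [om_z2 h]; ring
  have hmem1 := memVF'_GB h (bil_scal bil_om ((1/(2*(n:ℝ)) * fTrStar φ e F ξ))) hz11 hz21
  have htr1 : fTrStar φ e (F8 n φ e ξ η F) ξ = fTrStar φ e F ξ := by
    rw [hfun1, fTrStar_GB h e hz21, ← Finset.mul_sum, sum_om_star h e]
    field_simp
  have hP1 : MemF3sub n e φ ξ η (F8 n φ e ξ η F) := by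
    refine ⟨?_, ?_⟩
    · rw [hfun1]; exact hmem1.1
    · funext x y z
      show -(1/(2*(n:ℝ))) * fTrStar φ e F ξ * (η z * ⟪x, φ y⟫ - η y * ⟪x, φ z⟫)
          = -(1/(2*(n:ℝ))) * fTrStar φ e (F8 n φ e ξ η F) ξ * (η z * ⟪x, φ y⟫ - η y * ⟪x, φ z⟫)
      rw [htr1]
  ---- space 2
  have hrep2 : p16 n e φ ξ η F 2 = GB η (fun x z =>
      (1/4)*(F x ξ z + F (φ x) ξ (φ z) + F z ξ x + F (φ z) ξ (φ x))
        + (1/(2*(n:ℝ)) * fTr e F ξ) * ghB η x z) := by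
    funext x y z
    show (1/4) * (F2 ξ η F x y z + F4 φ ξ η F x y z + F5 ξ η F x y z + F6 φ ξ η F x y z
      - 4 * F7 n e ξ η F x y z - F3 ξ η F x y z) = _
    simp only [F2, F3, F4, F5, F6, F7, GB, ghB, hω]
    ring
  have hbil2 : Bil (fun x z : V =>
      (1/4)*(F x ξ z + F (φ x) ξ (φ z) + F z ξ x + F (φ z) ξ (φ x))
        + (1/(2*(n:ℝ)) * fTr e F ξ) * ghB η x z) := by
    constructor <;> intro w <;> constructor <;> intro s t <;>
      simp only [f1a, f1s, f3a, f3s, map_add, map_smul, smul_eq_mul, ghB,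
        inner_add_left, inner_add_right, real_inner_smul_left, real_inner_smul_right] <;> ring
  have hz12 : ∀ z, (fun x z : V =>
      (1/4)*(F x ξ z + F (φ x) ξ (φ z) + F z ξ x + F (φ z) ξ (φ x))
        + (1/(2*(n:ℝ)) * fTr e F ξ) * ghB η x z) ξ z = 0 := by
    intro z
    show (1/4)*(F ξ ξ z + F (φ ξ) ξ (φ z) + F z ξ ξ + F (φ z) ξ (φ ξ))
        + (1/(2*(n:ℝ)) * fTr e F ξ) * ghB η ξ z = 0
    rw [h.φξ, f1z, f3z, hω, hxi, gh_z1 h]; ring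
  have hz22 : ∀ x, (fun x z : V =>
      (1/4)*(F x ξ z + F (φ x) ξ (φ z) + F z ξ x + F (φ z) ξ (φ x))
        + (1/(2*(n:ℝ)) * fTr e F ξ) * ghB η x z) x ξ = 0 := by
    intro x
    show (1/4)*(F x ξ ξ + F (φ x) ξ (φ ξ) + F ξ ξ x + F (φ ξ) ξ (φ x))
        + (1/(2*(n:ℝ)) * fTr e F ξ) * ghB η x ξ = 0
    rw [h.φξ, f1z, f3z, hω, hxi, gh_z2 h]; ring
  have hphi2 : ∀ x z : V, (fun x z : V =>
      (1/4)*(F x ξ z + F (φ x) ξ (φ z) + F z ξ x + F (φ z) ξ (φ x))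
        + (1/(2*(n:ℝ)) * fTr e F ξ) * ghB η x z) (φ x) (φ z) = 1 * ((fun x z : V =>
      (1/4)*(F x ξ z + F (φ x) ξ (φ z) + F z ξ x + F (φ z) ξ (φ x))
        + (1/(2*(n:ℝ)) * fTr e F ξ) * ghB η x z) x z) := by
    intro x z
    show (1/4)*(F (φ x) ξ (φ z) + F (φ (φ x)) ξ (φ (φ z)) + F (φ z) ξ (φ x)
        + F (φ (φ z)) ξ (φ (φ x))) + (1/(2*(n:ℝ)) * fTr e F ξ) * ghB η (φ x) (φ z) = _
    rw [key x z, key z x, gh_phi h]; ring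
  have hsym2 : ∀ x z : V, (fun x z : V =>
      (1/4)*(F x ξ z + F (φ x) ξ (φ z) + F z ξ x + F (φ z) ξ (φ x))
        + (1/(2*(n:ℝ)) * fTr e F ξ) * ghB η x z) z x = 1 * ((fun x z : V =>
      (1/4)*(F x ξ z + F (φ x) ξ (φ z) + F z ξ x + F (φ z) ξ (φ x))
        + (1/(2*(n:ℝ)) * fTr e F ξ) * ghB η x z) x z) := by
    intro x z
    show (1/4)*(F z ξ x + F (φ z) ξ (φ x) + F x ξ z + F (φ x) ξ (φ z))
        + (1/(2*(n:ℝ)) * fTr e F ξ) * ghB η z x = _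
    rw [gh_symm]; ring
  have htrace2 : ∑ i, (fun x z : V =>
      (1/4)*(F x ξ z + F (φ x) ξ (φ z) + F z ξ x + F (φ z) ξ (φ x))
        + (1/(2*(n:ℝ)) * fTr e F ξ) * ghB η x z) (e i) (e i) = 0 := by
    simp only [Finset.sum_add_distrib]
    rw [← Finset.mul_sum, ← Finset.mul_sum]
    simp only [Finset.sum_add_distrib]
    rw [trB, trBφ, sum_gh_diag h e]
    field_simp
    ring
  have hbd2 : BData φ ξ η (GB η (fun x z : V =>
      (1/4)*(F x ξ z + F (φ x) ξ (φ z) + F z ξ x + F (φ z) ξ (φ x))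
        + (1/(2*(n:ℝ)) * fTr e F ξ) * ghB η x z)) (fun x z : V =>
      (1/4)*(F x ξ z + F (φ x) ξ (φ z) + F z ξ x + F (φ z) ξ (φ x))
        + (1/(2*(n:ℝ)) * fTr e F ξ) * ghB η x z) :=
    ⟨fun x y z => rfl, hbil2, hz12, hz22⟩
  have hcomp2 := comp_B h hbd2 hphi2 hsym2
  have hP2 : MemF4sub' n e φ ξ η (p16 n e φ ξ η F 2) := by
    rw [hrep2]
    refine ⟨memVF'_GB h hbil2 hz12 hz22, ?_, ?_, ?_⟩
    · funext x y z; rw [hcomp2.2.2.2.1 x y z, one_mul]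
    · funext x y z; rw [hcomp2.2.2.2.2.1 x y z, one_mul]
    · rw [fTr_GB h e hz22, htrace2, neg_zero]
  ---- space 3
  have hrep3 : p16 n e φ ξ η F 3 = GB η (fun x z =>
      (1/4)*(F x ξ z + F (φ x) ξ (φ z) - F z ξ x - F (φ z) ξ (φ x))
        - (1/(2*(n:ℝ)) * fTrStar φ e F ξ) * omB φ x z) := by
    funext x y z
    show (1/4) * (F2 ξ η F x y z + F4 φ ξ η F x y z - F5 ξ η F x y z - F6 φ ξ η F x y z
      - 4 * F8 n φ e ξ η F x y z - F3 ξ η F x y z) = _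
    simp only [F2, F3, F4, F5, F6, F8, GB, omB, hω]
    ring
  have hbil3 : Bil (fun x z : V =>
      (1/4)*(F x ξ z + F (φ x) ξ (φ z) - F z ξ x - F (φ z) ξ (φ x))
        - (1/(2*(n:ℝ)) * fTrStar φ e F ξ) * omB φ x z) := by
    constructor <;> intro w <;> constructor <;> intro s t <;>
      simp only [f1a, f1s, f3a, f3s, map_add, map_smul, smul_eq_mul, omB,
        inner_add_left, inner_add_right, real_inner_smul_left, real_inner_smul_right] <;> ring
  have hz13 : ∀ z, (fun x z : V =>
      (1/4)*(F x ξ z + F (φ x) ξ (φ z) - F z ξ x - F (φ z) ξ (φ x))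
        - (1/(2*(n:ℝ)) * fTrStar φ e F ξ) * omB φ x z) ξ z = 0 := by
    intro z
    show (1/4)*(F ξ ξ z + F (φ ξ) ξ (φ z) - F z ξ ξ - F (φ z) ξ (φ ξ))
        - (1/(2*(n:ℝ)) * fTrStar φ e F ξ) * omB φ ξ z = 0
    rw [h.φξ, f1z, f3z, hω, hxi, om_z1 h]; ring
  have hz23 : ∀ x, (fun x z : V =>
      (1/4)*(F x ξ z + F (φ x) ξ (φ z) - F z ξ x - F (φ z) ξ (φ x))
        - (1/(2*(n:ℝ)) * fTrStar φ e F ξ) * omB φ x z) x ξ = 0 := by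
    intro x
    show (1/4)*(F x ξ ξ + F (φ x) ξ (φ ξ) - F ξ ξ x - F (φ ξ) ξ (φ x))
        - (1/(2*(n:ℝ)) * fTrStar φ e F ξ) * omB φ x ξ = 0
    rw [h.φξ, f1z, f3z, hω, hxi, om_z2 h]; ring
  have hphi3 : ∀ x z : V, (fun x z : V =>
      (1/4)*(F x ξ z + F (φ x) ξ (φ z) - F z ξ x - F (φ z) ξ (φ x))
        - (1/(2*(n:ℝ)) * fTrStar φ e F ξ) * omB φ x z) (φ x) (φ z) = 1 * ((fun x z : V =>
      (1/4)*(F x ξ z + F (φ x) ξ (φ z) - F z ξ x - F (φ z) ξ (φ x))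
        - (1/(2*(n:ℝ)) * fTrStar φ e F ξ) * omB φ x z) x z) := by
    intro x z
    show (1/4)*(F (φ x) ξ (φ z) + F (φ (φ x)) ξ (φ (φ z)) - F (φ z) ξ (φ x)
        - F (φ (φ z)) ξ (φ (φ x))) - (1/(2*(n:ℝ)) * fTrStar φ e F ξ) * omB φ (φ x) (φ z) = _
    rw [key x z, key z x, om_phi h]; ring
  have hsym3 : ∀ x z : V, (fun x z : V =>
      (1/4)*(F x ξ z + F (φ x) ξ (φ z) - F z ξ x - F (φ z) ξ (φ x))
        - (1/(2*(n:ℝ)) * fTrStar φ e F ξ) * omB φ x z) z x = (-1) * ((fun x z : V =>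
      (1/4)*(F x ξ z + F (φ x) ξ (φ z) - F z ξ x - F (φ z) ξ (φ x))
        - (1/(2*(n:ℝ)) * fTrStar φ e F ξ) * omB φ x z) x z) := by
    intro x z
    show (1/4)*(F z ξ x + F (φ z) ξ (φ x) - F x ξ z - F (φ x) ξ (φ z))
        - (1/(2*(n:ℝ)) * fTrStar φ e F ξ) * omB φ z x = _
    rw [om_anti h]; ring
  have htrace3 : ∑ i, (fun x z : V =>
      (1/4)*(F x ξ z + F (φ x) ξ (φ z) - F z ξ x - F (φ z) ξ (φ x))
        - (1/(2*(n:ℝ)) * fTrStar φ e F ξ) * omB φ x z) (e i) (φ (e i)) = 0 := by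
    simp only [Finset.sum_sub_distrib]
    rw [← Finset.mul_sum, ← Finset.mul_sum]
    simp only [Finset.sum_add_distrib, Finset.sum_sub_distrib]
    rw [trsB, trsBφ, trsBt, trsBφt, sum_om_star h e]
    field_simp
    ring
  have hbd3 : BData φ ξ η (GB η (fun x z : V =>
      (1/4)*(F x ξ z + F (φ x) ξ (φ z) - F z ξ x - F (φ z) ξ (φ x))
        - (1/(2*(n:ℝ)) * fTrStar φ e F ξ) * omB φ x z)) (fun x z : V =>
      (1/4)*(F x ξ z + F (φ x) ξ (φ z) - F z ξ x - F (φ z) ξ (φ x))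
        - (1/(2*(n:ℝ)) * fTrStar φ e F ξ) * omB φ x z) :=
    ⟨fun x y z => rfl, hbil3, hz13, hz23⟩
  have hcomp3 := comp_B h hbd3 hphi3 hsym3
  have hP3 : MemF5sub' n e φ ξ η (p16 n e φ ξ η F 3) := by
    rw [hrep3]
    refine ⟨memVF'_GB h hbil3 hz13 hz23, ?_, ?_, ?_⟩
    · funext x y z; rw [hcomp3.2.2.2.1 x y z, one_mul]
    · funext x y z
      show _ = -(F5 ξ η (GB η _)) x y z
      rw [hcomp3.2.2.2.2.1 x y z]; ring
    · rw [fTrStar_GB h e hz23, htrace3, neg_zero]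
  ---- space 4
  have hrep4 : p16 n e φ ξ η F 4 = GB η (fun x z =>
      (1/4)*(F x ξ z - F (φ x) ξ (φ z) + F z ξ x - F (φ z) ξ (φ x))) := by
    funext x y z
    show (1/4) * (F2 ξ η F x y z - F4 φ ξ η F x y z + F5 ξ η F x y z - F6 φ ξ η F x y z
      - F3 ξ η F x y z) = _
    simp only [F2, F3, F4, F5, F6, GB, hω]
    ring
  have hbil4 : Bil (fun x z : V =>
      (1/4)*(F x ξ z - F (φ x) ξ (φ z) + F z ξ x - F (φ z) ξ (φ x))) := by
    constructor <;> intro w <;> constructor <;> intro s t <;>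
      simp only [f1a, f1s, f3a, f3s, map_add, map_smul, smul_eq_mul] <;> ring
  have hz14 : ∀ z, (fun x z : V =>
      (1/4)*(F x ξ z - F (φ x) ξ (φ z) + F z ξ x - F (φ z) ξ (φ x))) ξ z = 0 := by
    intro z
    show (1/4)*(F ξ ξ z - F (φ ξ) ξ (φ z) + F z ξ ξ - F (φ z) ξ (φ ξ)) = 0
    rw [h.φξ, f1z, f3z, hω, hxi]; ring
  have hz24 : ∀ x, (fun x z : V =>
      (1/4)*(F x ξ z - F (φ x) ξ (φ z) + F z ξ x - F (φ z) ξ (φ x))) x ξ = 0 := by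
    intro x
    show (1/4)*(F x ξ ξ - F (φ x) ξ (φ ξ) + F ξ ξ x - F (φ ξ) ξ (φ x)) = 0
    rw [h.φξ, f1z, f3z, hω, hxi]; ring
  have hphi4 : ∀ x z : V, (fun x z : V =>
      (1/4)*(F x ξ z - F (φ x) ξ (φ z) + F z ξ x - F (φ z) ξ (φ x))) (φ x) (φ z)
      = (-1) * ((fun x z : V =>
      (1/4)*(F x ξ z - F (φ x) ξ (φ z) + F z ξ x - F (φ z) ξ (φ x))) x z) := by
    intro x z
    show (1/4)*(F (φ x) ξ (φ z) - F (φ (φ x)) ξ (φ (φ z)) + F (φ z) ξ (φ x)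
        - F (φ (φ z)) ξ (φ (φ x))) = _
    rw [key x z, key z x]; ring
  have hsym4 : ∀ x z : V, (fun x z : V =>
      (1/4)*(F x ξ z - F (φ x) ξ (φ z) + F z ξ x - F (φ z) ξ (φ x))) z x
      = 1 * ((fun x z : V =>
      (1/4)*(F x ξ z - F (φ x) ξ (φ z) + F z ξ x - F (φ z) ξ (φ x))) x z) := by
    intro x z
    show (1/4)*(F z ξ x - F (φ z) ξ (φ x) + F x ξ z - F (φ x) ξ (φ z)) = _
    ring
  have hbd4 : BData φ ξ η (GB η (fun x z : V =>
      (1/4)*(F x ξ z - F (φ x) ξ (φ z) + F z ξ x - F (φ z) ξ (φ x)))) (fun x z : V =>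
      (1/4)*(F x ξ z - F (φ x) ξ (φ z) + F z ξ x - F (φ z) ξ (φ x))) :=
    ⟨fun x y z => rfl, hbil4, hz14, hz24⟩
  have hcomp4 := comp_B h hbd4 hphi4 hsym4
  have hP4 : MemF6sub φ ξ η (p16 n e φ ξ η F 4) := by
    rw [hrep4]
    refine ⟨memVF'_GB h hbil4 hz14 hz24, ?_, ?_⟩
    · funext x y z
      show _ = -(F4 φ ξ η (GB η _)) x y z
      rw [hcomp4.2.2.2.1 x y z]; ring
    · funext x y z; rw [hcomp4.2.2.2.2.1 x y z, one_mul]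
  ---- space 5
  have hrep5 : p16 n e φ ξ η F 5 = GB η (fun x z =>
      (1/4)*(F x ξ z - F (φ x) ξ (φ z) - F z ξ x + F (φ z) ξ (φ x))) := by
    funext x y z
    show (1/4) * (F2 ξ η F x y z - F4 φ ξ η F x y z - F5 ξ η F x y z + F6 φ ξ η F x y z
      - F3 ξ η F x y z) = _
    simp only [F2, F3, F4, F5, F6, GB, hω]
    ring
  have hbil5 : Bil (fun x z : V =>
      (1/4)*(F x ξ z - F (φ x) ξ (φ z) - F z ξ x + F (φ z) ξ (φ x))) := by
    constructor <;> intro w <;> constructor <;> intro s t <;>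
      simp only [f1a, f1s, f3a, f3s, map_add, map_smul, smul_eq_mul] <;> ring
  have hz15 : ∀ z, (fun x z : V =>
      (1/4)*(F x ξ z - F (φ x) ξ (φ z) - F z ξ x + F (φ z) ξ (φ x))) ξ z = 0 := by
    intro z
    show (1/4)*(F ξ ξ z - F (φ ξ) ξ (φ z) - F z ξ ξ + F (φ z) ξ (φ ξ)) = 0
    rw [h.φξ, f1z, f3z, hω, hxi]; ring
  have hz25 : ∀ x, (fun x z : V =>
      (1/4)*(F x ξ z - F (φ x) ξ (φ z) - F z ξ x + F (φ z) ξ (φ x))) x ξ = 0 := by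
    intro x
    show (1/4)*(F x ξ ξ - F (φ x) ξ (φ ξ) - F ξ ξ x + F (φ ξ) ξ (φ x)) = 0
    rw [h.φξ, f1z, f3z, hω, hxi]; ring
  have hphi5 : ∀ x z : V, (fun x z : V =>
      (1/4)*(F x ξ z - F (φ x) ξ (φ z) - F z ξ x + F (φ z) ξ (φ x))) (φ x) (φ z)
      = (-1) * ((fun x z : V =>
      (1/4)*(F x ξ z - F (φ x) ξ (φ z) - F z ξ x + F (φ z) ξ (φ x))) x z) := by
    intro x z
    show (1/4)*(F (φ x) ξ (φ z) - F (φ (φ x)) ξ (φ (φ z)) - F (φ z) ξ (φ x)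
        + F (φ (φ z)) ξ (φ (φ x))) = _
    rw [key x z, key z x]; ring
  have hsym5 : ∀ x z : V, (fun x z : V =>
      (1/4)*(F x ξ z - F (φ x) ξ (φ z) - F z ξ x + F (φ z) ξ (φ x))) z x
      = (-1) * ((fun x z : V =>
      (1/4)*(F x ξ z - F (φ x) ξ (φ z) - F z ξ x + F (φ z) ξ (φ x))) x z) := by
    intro x z
    show (1/4)*(F z ξ x - F (φ z) ξ (φ x) - F x ξ z + F (φ x) ξ (φ z)) = _
    ring
  have hbd5 : BData φ ξ η (GB η (fun x z : V =>
      (1/4)*(F x ξ z - F (φ x) ξ (φ z) - F z ξ x + F (φ z) ξ (φ x)))) (fun x z : V =>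
      (1/4)*(F x ξ z - F (φ x) ξ (φ z) - F z ξ x + F (φ z) ξ (φ x))) :=
    ⟨fun x y z => rfl, hbil5, hz15, hz25⟩
  have hcomp5 := comp_B h hbd5 hphi5 hsym5
  have hP5 : MemF7sub φ ξ η (p16 n e φ ξ η F 5) := by
    rw [hrep5]
    refine ⟨memVF'_GB h hbil5 hz15 hz25, ?_, ?_⟩
    · funext x y z
      show _ = -(F4 φ ξ η (GB η _)) x y z
      rw [hcomp5.2.2.2.1 x y z]; ring
    · funext x y z
      show _ = -(F5 ξ η (GB η _)) x y z
      rw [hcomp5.2.2.2.2.1 x y z]; ring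
  ---- space 6
  have hAφ : ∀ y z, F ξ (φ y) (φ z) = -F ξ y z := by
    intro y z
    have h1 := hthird ξ y z
    have h2 : F ξ y ξ = 0 := by have := hanti ξ y ξ; rw [hω y] at this; linarith
    rw [hω z, h2] at h1; linarith
  have hfun6 : p16 n e φ ξ η F 6 = GA η (fun y z => F ξ y z) := by
    funext x y z
    show F1 ξ η F x y z - F3 ξ η F x y z = _
    simp only [F1, F3, GA, hω]; ring
  have hP6 : MemF8sub φ ξ η (p16 n e φ ξ η F 6) := by
    rw [hfun6]
    exact memF8_GA h ⟨fun z => hT.2.1 ξ z, fun y => hT.2.2 ξ y⟩ (fun z => hω z)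
      (fun y z => hanti ξ y z) (fun y z => by rw [hAφ y z])
  refine ⟨?_, ?_⟩
  · intro i
    fin_cases i
    · exact hP0
    · exact hP1
    · exact hP2
    · exact hP3
    · exact hP4
    · exact hP5
    · exact hP6
  · intro x y z
    rw [Fin.sum_univ_seven]
    have hde := memVF_decomp h hM x y z
    have e0 : p16 n e φ ξ η F 0 x y z = F7 n e ξ η F x y z := rfl
    have e1 : p16 n e φ ξ η F 1 x y z = F8 n φ e ξ η F x y z := rfl
    have e2 : p16 n e φ ξ η F 2 x y z = (1/4) * (F2 ξ η F x y z + F4 φ ξ η F x y z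
      + F5 ξ η F x y z + F6 φ ξ η F x y z - 4 * F7 n e ξ η F x y z - F3 ξ η F x y z) := rfl
    have e3 : p16 n e φ ξ η F 3 x y z = (1/4) * (F2 ξ η F x y z + F4 φ ξ η F x y z
      - F5 ξ η F x y z - F6 φ ξ η F x y z - 4 * F8 n φ e ξ η F x y z - F3 ξ η F x y z) := rfl
    have e4 : p16 n e φ ξ η F 4 x y z = (1/4) * (F2 ξ η F x y z - F4 φ ξ η F x y z
      + F5 ξ η F x y z - F6 φ ξ η F x y z - F3 ξ η F x y z) := rfl
    have e5 : p16 n e φ ξ η F 5 x y z = (1/4) * (F2 ξ η F x y z - F4 φ ξ η F x y z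
      - F5 ξ η F x y z + F6 φ ξ η F x y z - F3 ξ η F x y z) := rfl
    have e6 : p16 n e φ ξ η F 6 x y z = F1 ξ η F x y z - F3 ξ η F x y z := rfl
    rw [e0, e1, e2, e3, e4, e5, e6]
    simp only [F1, F2, F3, F4, F5, F6, F7, F8, hω]
    linear_combination hde

end Aux16
namespace Aux16

variable {V : Type*} [NormedAddCommGroup V] [InnerProductSpace ℝ V]
variable {φ : V →ₗ[ℝ] V} {ξ : V} {η : V →ₗ[ℝ] ℝ}
variable {ι : Type*} [Fintype ι]

/-- formula-level component table for B-type elements. -/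
theorem p16_eval' {n : ℕ} {e : OrthonormalBasis ι ℝ V} {G C} {δ ε c7 c8 : ℝ}
    (h : Hyp φ ξ η) (hP : Pack n φ ξ η e G C δ ε c7 c8) (x y z : V) :
      (F7 n e ξ η G x y z = c7 * G x y z) ∧
      (F8 n φ e ξ η G x y z = c8 * G x y z) ∧
      ((1/4) * (F2 ξ η G x y z + F4 φ ξ η G x y z + F5 ξ η G x y z + F6 φ ξ η G x y z
        - 4 * F7 n e ξ η G x y z - F3 ξ η G x y z) = ((1+δ+ε+δ*ε)/4 - c7) * G x y z) ∧
      ((1/4) * (F2 ξ η G x y z + F4 φ ξ η G x y z - F5 ξ η G x y z - F6 φ ξ η G x y z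
        - 4 * F8 n φ e ξ η G x y z - F3 ξ η G x y z) = ((1+δ-ε-δ*ε)/4 - c8) * G x y z) ∧
      ((1/4) * (F2 ξ η G x y z - F4 φ ξ η G x y z + F5 ξ η G x y z - F6 φ ξ η G x y z
        - F3 ξ η G x y z) = ((1-δ+ε-δ*ε)/4) * G x y z) ∧
      ((1/4) * (F2 ξ η G x y z - F4 φ ξ η G x y z - F5 ξ η G x y z + F6 φ ξ η G x y z
        - F3 ξ η G x y z) = ((1-δ-ε+δ*ε)/4) * G x y z) ∧
      (F1 ξ η G x y z - F3 ξ η G x y z = 0 * G x y z) :=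
  p16_eval h hP x y z

/-- formula-level component table for 𝔽₈-elements. -/
theorem p16_eval_A' {n : ℕ} {e : OrthonormalBasis ι ℝ V} {G}
    (h : Hyp φ ξ η) (hG : MemF8sub φ ξ η G) (x y z : V) :
      (F7 n e ξ η G x y z = 0) ∧
      (F8 n φ e ξ η G x y z = 0) ∧
      ((1/4) * (F2 ξ η G x y z + F4 φ ξ η G x y z + F5 ξ η G x y z + F6 φ ξ η G x y z
        - 4 * F7 n e ξ η G x y z - F3 ξ η G x y z) = 0) ∧
      ((1/4) * (F2 ξ η G x y z + F4 φ ξ η G x y z - F5 ξ η G x y z - F6 φ ξ η G x y z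
        - 4 * F8 n φ e ξ η G x y z - F3 ξ η G x y z) = 0) ∧
      ((1/4) * (F2 ξ η G x y z - F4 φ ξ η G x y z + F5 ξ η G x y z - F6 φ ξ η G x y z
        - F3 ξ η G x y z) = 0) ∧
      ((1/4) * (F2 ξ η G x y z - F4 φ ξ η G x y z - F5 ξ η G x y z + F6 φ ξ η G x y z
        - F3 ξ η G x y z) = 0) ∧
      (F1 ξ η G x y z - F3 ξ η G x y z = G x y z) :=
  p16_eval_A h hG x y z

theorem part2 (h : Hyp φ ξ η) {n : ℕ} (hn : 1 ≤ n) (e : OrthonormalBasis (Fin (2*n+1)) ℝ V)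
    {F} (hM : MemVF φ ξ η F) :
    ∃! q : Fin 7 → (V → V → V → ℝ),
      (∀ i, P16 n e φ ξ η i (q i)) ∧ ∀ x y z, F x y z = ∑ i : Fin 7, q i x y z := by
  obtain ⟨hmem, hsum⟩ := part1 h hn e hM
  refine ⟨p16 n e φ ξ η F, ⟨hmem, hsum⟩, ?_⟩
  rintro q ⟨hq1, hq2⟩
  have m0 : MemF2sub n e φ ξ η (q 0) := hq1 0
  have m1 : MemF3sub n e φ ξ η (q 1) := hq1 1
  have m2 : MemF4sub' n e φ ξ η (q 2) := hq1 2
  have m3 : MemF5sub' n e φ ξ η (q 3) := hq1 3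
  have m4 : MemF6sub φ ξ η (q 4) := hq1 4
  have m5 : MemF7sub φ ξ η (q 5) := hq1 5
  have m6 : MemF8sub φ ξ η (q 6) := hq1 6
  have t0 := fun x y z => p16_eval' h (pack0 h m0) x y z
  have t1 := fun x y z => p16_eval' h (pack1 h m1) x y z
  have t2 := fun x y z => p16_eval' h (pack2 h m2) x y z
  have t3 := fun x y z => p16_eval' h (pack3 h m3) x y z
  have t4 := fun x y z => p16_eval' h (pack4 (n := n) (e := e) h m4) x y z
  have t5 := fun x y z => p16_eval' h (pack5 (n := n) (e := e) h m5) x y z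
  have t6 := fun x y z => p16_eval_A' (n := n) (e := e) h m6 x y z
  have hq2' : ∀ x y z : V, F x y z = q 0 x y z + q 1 x y z + q 2 x y z + q 3 x y z
      + q 4 x y z + q 5 x y z + q 6 x y z := by
    intro x y z; rw [hq2 x y z, Fin.sum_univ_seven]
  have htr' : fTr e F ξ = fTr e (q 0) ξ + fTr e (q 1) ξ + fTr e (q 2) ξ + fTr e (q 3) ξ
      + fTr e (q 4) ξ + fTr e (q 5) ξ + fTr e (q 6) ξ := by
    unfold fTr
    rw [Finset.sum_congr rfl fun i (_ : i ∈ Finset.univ) => hq2' (e i) (e i) ξ]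
    simp only [Finset.sum_add_distrib]
  have htrs' : fTrStar φ e F ξ = fTrStar φ e (q 0) ξ + fTrStar φ e (q 1) ξ
      + fTrStar φ e (q 2) ξ + fTrStar φ e (q 3) ξ + fTrStar φ e (q 4) ξ
      + fTrStar φ e (q 5) ξ + fTrStar φ e (q 6) ξ := by
    unfold fTrStar
    rw [Finset.sum_congr rfl fun i (_ : i ∈ Finset.univ) => hq2' (e i) (φ (e i)) ξ]
    simp only [Finset.sum_add_distrib]
  have L1 : ∀ x y z : V, F1 ξ η F x y z = F1 ξ η (q 0) x y z + F1 ξ η (q 1) x y z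
      + F1 ξ η (q 2) x y z + F1 ξ η (q 3) x y z + F1 ξ η (q 4) x y z + F1 ξ η (q 5) x y z
      + F1 ξ η (q 6) x y z := fun x y z => by simp only [F1, hq2']; ring
  have L2 : ∀ x y z : V, F2 ξ η F x y z = F2 ξ η (q 0) x y z + F2 ξ η (q 1) x y z
      + F2 ξ η (q 2) x y z + F2 ξ η (q 3) x y z + F2 ξ η (q 4) x y z + F2 ξ η (q 5) x y z
      + F2 ξ η (q 6) x y z := fun x y z => by simp only [F2, hq2']; ring
  have L3 : ∀ x y z : V, F3 ξ η F x y z = F3 ξ η (q 0) x y z + F3 ξ η (q 1) x y z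
      + F3 ξ η (q 2) x y z + F3 ξ η (q 3) x y z + F3 ξ η (q 4) x y z + F3 ξ η (q 5) x y z
      + F3 ξ η (q 6) x y z := fun x y z => by simp only [F3, hq2']; ring
  have L4 : ∀ x y z : V, F4 φ ξ η F x y z = F4 φ ξ η (q 0) x y z + F4 φ ξ η (q 1) x y z
      + F4 φ ξ η (q 2) x y z + F4 φ ξ η (q 3) x y z + F4 φ ξ η (q 4) x y z
      + F4 φ ξ η (q 5) x y z + F4 φ ξ η (q 6) x y z := fun x y z => by
    simp only [F4, hq2']; ring
  have L5 : ∀ x y z : V, F5 ξ η F x y z = F5 ξ η (q 0) x y z + F5 ξ η (q 1) x y z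
      + F5 ξ η (q 2) x y z + F5 ξ η (q 3) x y z + F5 ξ η (q 4) x y z + F5 ξ η (q 5) x y z
      + F5 ξ η (q 6) x y z := fun x y z => by simp only [F5, hq2']; ring
  have L6 : ∀ x y z : V, F6 φ ξ η F x y z = F6 φ ξ η (q 0) x y z + F6 φ ξ η (q 1) x y z
      + F6 φ ξ η (q 2) x y z + F6 φ ξ η (q 3) x y z + F6 φ ξ η (q 4) x y z
      + F6 φ ξ η (q 5) x y z + F6 φ ξ η (q 6) x y z := fun x y z => by
    simp only [F6, hq2']; ring
  have L7 : ∀ x y z : V, F7 n e ξ η F x y z = F7 n e ξ η (q 0) x y z + F7 n e ξ η (q 1) x y z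
      + F7 n e ξ η (q 2) x y z + F7 n e ξ η (q 3) x y z + F7 n e ξ η (q 4) x y z
      + F7 n e ξ η (q 5) x y z + F7 n e ξ η (q 6) x y z := fun x y z => by
    simp only [F7]; rw [htr']; ring
  have L8 : ∀ x y z : V, F8 n φ e ξ η F x y z = F8 n φ e ξ η (q 0) x y z
      + F8 n φ e ξ η (q 1) x y z + F8 n φ e ξ η (q 2) x y z + F8 n φ e ξ η (q 3) x y z
      + F8 n φ e ξ η (q 4) x y z + F8 n φ e ξ η (q 5) x y z + F8 n φ e ξ η (q 6) x y z :=
    fun x y z => by simp only [F8]; rw [htrs']; ring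
  funext i
  fin_cases i
  · funext x y z
    show q 0 x y z = F7 n e ξ η F x y z
    linear_combination -(L7 x y z) - (t0 x y z).1 - (t1 x y z).1 - (t2 x y z).1
      - (t3 x y z).1 - (t4 x y z).1 - (t5 x y z).1 - (t6 x y z).1
  · funext x y z
    show q 1 x y z = F8 n φ e ξ η F x y z
    linear_combination -(L8 x y z) - (t0 x y z).2.1 - (t1 x y z).2.1 - (t2 x y z).2.1
      - (t3 x y z).2.1 - (t4 x y z).2.1 - (t5 x y z).2.1 - (t6 x y z).2.1
  · funext x y z
    show q 2 x y z = (1/4) * (F2 ξ η F x y z + F4 φ ξ η F x y z + F5 ξ η F x y z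
      + F6 φ ξ η F x y z - 4 * F7 n e ξ η F x y z - F3 ξ η F x y z)
    linear_combination (-(1/4) : ℝ) * (L2 x y z + L4 x y z + L5 x y z + L6 x y z
        - 4 * L7 x y z - L3 x y z)
      - (t0 x y z).2.2.1 - (t1 x y z).2.2.1 - (t2 x y z).2.2.1 - (t3 x y z).2.2.1
      - (t4 x y z).2.2.1 - (t5 x y z).2.2.1 - (t6 x y z).2.2.1
  · funext x y z
    show q 3 x y z = (1/4) * (F2 ξ η F x y z + F4 φ ξ η F x y z - F5 ξ η F x y z
      - F6 φ ξ η F x y z - 4 * F8 n φ e ξ η F x y z - F3 ξ η F x y z)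
    linear_combination (-(1/4) : ℝ) * (L2 x y z + L4 x y z - L5 x y z - L6 x y z
        - 4 * L8 x y z - L3 x y z)
      - (t0 x y z).2.2.2.1 - (t1 x y z).2.2.2.1 - (t2 x y z).2.2.2.1 - (t3 x y z).2.2.2.1
      - (t4 x y z).2.2.2.1 - (t5 x y z).2.2.2.1 - (t6 x y z).2.2.2.1
  · funext x y z
    show q 4 x y z = (1/4) * (F2 ξ η F x y z - F4 φ ξ η F x y z + F5 ξ η F x y z
      - F6 φ ξ η F x y z - F3 ξ η F x y z)
    linear_combination (-(1/4) : ℝ) * (L2 x y z - L4 x y z + L5 x y z - L6 x y z - L3 x y z)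
      - (t0 x y z).2.2.2.2.1 - (t1 x y z).2.2.2.2.1 - (t2 x y z).2.2.2.2.1
      - (t3 x y z).2.2.2.2.1 - (t4 x y z).2.2.2.2.1 - (t5 x y z).2.2.2.2.1
      - (t6 x y z).2.2.2.2.1
  · funext x y z
    show q 5 x y z = (1/4) * (F2 ξ η F x y z - F4 φ ξ η F x y z - F5 ξ η F x y z
      + F6 φ ξ η F x y z - F3 ξ η F x y z)
    linear_combination (-(1/4) : ℝ) * (L2 x y z - L4 x y z - L5 x y z + L6 x y z - L3 x y z)
      - (t0 x y z).2.2.2.2.2.1 - (t1 x y z).2.2.2.2.2.1 - (t2 x y z).2.2.2.2.2.1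
      - (t3 x y z).2.2.2.2.2.1 - (t4 x y z).2.2.2.2.2.1 - (t5 x y z).2.2.2.2.2.1
      - (t6 x y z).2.2.2.2.2.1
  · funext x y z
    show q 6 x y z = F1 ξ η F x y z - F3 ξ η F x y z
    linear_combination -(L1 x y z) + (L3 x y z)
      - (t0 x y z).2.2.2.2.2.2 - (t1 x y z).2.2.2.2.2.2 - (t2 x y z).2.2.2.2.2.2
      - (t3 x y z).2.2.2.2.2.2 - (t4 x y z).2.2.2.2.2.2 - (t5 x y z).2.2.2.2.2.2
      - (t6 x y z).2.2.2.2.2.2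

end Aux16
namespace Aux16

variable {V : Type*} [NormedAddCommGroup V] [InnerProductSpace ℝ V]
variable {φ : V →ₗ[ℝ] V} {ξ : V} {η : V →ₗ[ℝ] ℝ}
variable {ι : Type*} [Fintype ι]

theorem orth_eps (h : Hyp φ ξ η) (e : OrthonormalBasis ι ℝ V) {F G CF CG}
    (hDF : BData φ ξ η F CF) (hDG : BData φ ξ η G CG)
    (htF : ∀ x z : V, CF z x = CF x z) (htG : ∀ x z : V, CG z x = -(CG x z)) :
    innerF e F G = 0 := by
  rw [hDF.funeq, hDG.funeq, innerF_GB_GB h e hDF.bil hDG.bil hDF.z2 hDG.z2,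
    sum_symm_anti e htF htG]
  ring

theorem orth_delta (h : Hyp φ ξ η) (e : OrthonormalBasis ι ℝ V) {F G CF CG}
    (hDF : BData φ ξ η F CF) (hDG : BData φ ξ η G CG)
    (hφF : ∀ x z : V, CF (φ x) (φ z) = CF x z)
    (hφG : ∀ x z : V, CG (φ x) (φ z) = -(CG x z)) :
    innerF e F G = 0 := by
  rw [hDF.funeq, hDG.funeq, innerF_GB_GB h e hDF.bil hDG.bil hDF.z2 hDG.z2]
  have hq := quad_phi h e hDF.bil hDG.bil hDF.z1 hDF.z2 (D := CG)
  have h2 : ∑ i, ∑ k, CF (φ (e i)) (φ (e k)) * CG (φ (e i)) (φ (e k))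
      = ∑ i, ∑ k, -(CF (e i) (e k) * CG (e i) (e k)) := by
    refine Finset.sum_congr rfl fun i _ => Finset.sum_congr rfl fun k _ => ?_
    rw [hφF, hφG]; ring
  simp only [Finset.sum_neg_distrib] at h2
  have hS : ∑ i, ∑ k, CF (e i) (e k) * CG (e i) (e k) = 0 := by linarith
  rw [hS]; ring

theorem orth_gh (h : Hyp φ ξ η) (e : OrthonormalBasis ι ℝ V) {F G CG} (c : ℝ)
    (hDF : BData φ ξ η F (fun x z => -(c) * ghB η x z)) (hDG : BData φ ξ η G CG)
    (htr : ∑ i, CG (e i) (e i) = 0) : innerF e F G = 0 := by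
  rw [hDF.funeq, hDG.funeq, innerF_GB_GB h e hDF.bil hDG.bil hDF.z2 hDG.z2]
  have inner_i : ∀ i, ∑ k, (-(c) * ghB η (e i) (e k)) * CG (e i) (e k)
      = -(c) * CG (e i) (e i) := by
    intro i
    have e1 : CG (e i) (e i) = ∑ k, ⟪e k, e i⟫ * CG (e i) (e k) :=
      lin_expand e (hDG.bil.2 (e i)) (e i)
    have e2 : ∑ k, η (e k) * CG (e i) (e k) = 0 := by
      rw [sum_eta_bil2 h e hDG.bil]; exact hDG.z2 _
    have expand : ∀ k, (-(c) * ghB η (e i) (e k)) * CG (e i) (e k)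
        = -(c) * (⟪e k, e i⟫ * CG (e i) (e k))
          + (c * η (e i)) * (η (e k) * CG (e i) (e k)) := by
      intro k
      unfold ghB
      rw [real_inner_comm (e k) (e i)]
      ring
    rw [Finset.sum_congr rfl fun k _ => expand k, Finset.sum_add_distrib,
      ← Finset.mul_sum, ← Finset.mul_sum, ← e1, e2]
    ring
  rw [Finset.sum_congr rfl fun i (_ : i ∈ Finset.univ) => inner_i i, ← Finset.mul_sum, htr]
  ring

theorem orth_om (h : Hyp φ ξ η) (e : OrthonormalBasis ι ℝ V) {F G CG} (c : ℝ)
    (hDF : BData φ ξ η F (fun x z => c * omB φ x z)) (hDG : BData φ ξ η G CG)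
    (htr : ∑ i, CG (e i) (φ (e i)) = 0) : innerF e F G = 0 := by
  rw [hDF.funeq, hDG.funeq, innerF_GB_GB h e hDF.bil hDG.bil hDF.z2 hDG.z2]
  have inner_i : ∀ i, ∑ k, (c * omB φ (e i) (e k)) * CG (e i) (e k)
      = -(c) * CG (e i) (φ (e i)) := by
    intro i
    have e1 : CG (e i) (φ (e i)) = ∑ k, ⟪e k, φ (e i)⟫ * CG (e i) (e k) :=
      lin_expand e (hDG.bil.2 (e i)) (φ (e i))
    have expand : ∀ k, (c * omB φ (e i) (e k)) * CG (e i) (e k)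
        = -(c) * (⟪e k, φ (e i)⟫ * CG (e i) (e k)) := by
      intro k
      unfold omB
      rw [← real_inner_comm (e i) (φ (e k)), h.skew (e k) (e i)]
      ring
    rw [Finset.sum_congr rfl fun k _ => expand k, ← Finset.mul_sum, ← e1]
  rw [Finset.sum_congr rfl fun i (_ : i ∈ Finset.univ) => inner_i i, ← Finset.mul_sum, htr]
  ring

theorem orth_GA (h : Hyp φ ξ η) (e : OrthonormalBasis ι ℝ V) {F G CF}
    (hDF : BData φ ξ η F CF) (hG : MemF8sub φ ξ η G) : innerF e F G = 0 := by
  have hGeq : G = GA η (fun y z => G ξ y z) :=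
    funext fun x => funext fun y => funext fun z => memF8_decomp h hG x y z
  rw [hDF.funeq, hGeq, innerF_GB_GA h e hDF.bil hDF.z1]

theorem part3 (h : Hyp φ ξ η) {n : ℕ} (e : OrthonormalBasis (Fin (2*n+1)) ℝ V) :
    ∀ i j, i ≠ j → ∀ F G : V → V → V → ℝ, P16 n e φ ξ η i F → P16 n e φ ξ η j G →
      innerF e F G = 0 := by
  -- packs per space
  have bd0 : ∀ F, MemF2sub n e φ ξ η F → Pack n φ ξ η e F
      (fun x z => -(1 / (2 * (n : ℝ)) * fTr e F ξ) * ghB η x z) 1 1 1 0 :=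
    fun F hF => pack0 h hF
  have bd1 : ∀ F, MemF3sub n e φ ξ η F → Pack n φ ξ η e F
      (fun x z => (1 / (2 * (n : ℝ)) * fTrStar φ e F ξ) * omB φ x z) 1 (-1) 0 1 :=
    fun F hF => pack1 h hF
  -- unordered pair results
  have o01 : ∀ F G, MemF2sub n e φ ξ η F → MemF3sub n e φ ξ η G → innerF e F G = 0 := by
    intro F G hF hG
    exact orth_eps h e (bd0 F hF).bd (bd1 G hG).bd
      (fun x z => by rw [(bd0 F hF).ht x z]; ring)
      (fun x z => by rw [(bd1 G hG).ht x z]; ring)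
  have o02 : ∀ F G, MemF2sub n e φ ξ η F → MemF4sub' n e φ ξ η G → innerF e F G = 0 := by
    intro F G hF hG
    have hDG := bdata_of_memVF' h hG.1
    refine orth_gh h e _ (bd0 F hF).bd hDG ?_
    have := fTr_B h e hDG
    rw [hG.2.2.2] at this
    linarith
  have o03 : ∀ F G, MemF2sub n e φ ξ η F → MemF5sub' n e φ ξ η G → innerF e F G = 0 := by
    intro F G hF hG
    exact orth_eps h e (bd0 F hF).bd (bdata_of_memVF' h hG.1)
      (fun x z => by rw [(bd0 F hF).ht x z]; ring)
      (fun x z => by rw [sign_F5' h hG.1.2.2 hG.2.2.1 x z])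
  have o04 : ∀ F G, MemF2sub n e φ ξ η F → MemF6sub φ ξ η G → innerF e F G = 0 := by
    intro F G hF hG
    exact orth_delta h e (bd0 F hF).bd (bdata_of_memVF' h hG.1)
      (fun x z => by rw [(bd0 F hF).hφ x z]; ring)
      (fun x z => by rw [sign_F4' h hG.1.1.1 hG.2.1 x z])
  have o05 : ∀ F G, MemF2sub n e φ ξ η F → MemF7sub φ ξ η G → innerF e F G = 0 := by
    intro F G hF hG
    exact orth_eps h e (bd0 F hF).bd (bdata_of_memVF' h hG.1)
      (fun x z => by rw [(bd0 F hF).ht x z]; ring)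
      (fun x z => by rw [sign_F5' h hG.1.2.2 hG.2.2 x z])
  have o12 : ∀ F G, MemF3sub n e φ ξ η F → MemF4sub' n e φ ξ η G → innerF e F G = 0 := by
    intro F G hF hG
    rw [innerF_comm]
    exact orth_eps h e (bdata_of_memVF' h hG.1) (bd1 F hF).bd
      (fun x z => by rw [sign_F5 h hG.1.2.2 hG.2.2.1 x z])
      (fun x z => by rw [(bd1 F hF).ht x z]; ring)
  have o13 : ∀ F G, MemF3sub n e φ ξ η F → MemF5sub' n e φ ξ η G → innerF e F G = 0 := by
    intro F G hF hG
    have hDG := bdata_of_memVF' h hG.1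
    refine orth_om h e _ (bd1 F hF).bd hDG ?_
    have := fTrStar_B h e hDG
    rw [hG.2.2.2] at this
    linarith
  have o14 : ∀ F G, MemF3sub n e φ ξ η F → MemF6sub φ ξ η G → innerF e F G = 0 := by
    intro F G hF hG
    rw [innerF_comm]
    exact orth_eps h e (bdata_of_memVF' h hG.1) (bd1 F hF).bd
      (fun x z => by rw [sign_F5 h hG.1.2.2 hG.2.2 x z])
      (fun x z => by rw [(bd1 F hF).ht x z]; ring)
  have o15 : ∀ F G, MemF3sub n e φ ξ η F → MemF7sub φ ξ η G → innerF e F G = 0 := by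
    intro F G hF hG
    exact orth_delta h e (bd1 F hF).bd (bdata_of_memVF' h hG.1)
      (fun x z => by rw [(bd1 F hF).hφ x z]; ring)
      (fun x z => by rw [sign_F4' h hG.1.1.1 hG.2.1 x z])
  have o23 : ∀ F G, MemF4sub' n e φ ξ η F → MemF5sub' n e φ ξ η G → innerF e F G = 0 := by
    intro F G hF hG
    exact orth_eps h e (bdata_of_memVF' h hF.1) (bdata_of_memVF' h hG.1)
      (fun x z => by rw [sign_F5 h hF.1.2.2 hF.2.2.1 x z])
      (fun x z => by rw [sign_F5' h hG.1.2.2 hG.2.2.1 x z])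
  have o24 : ∀ F G, MemF4sub' n e φ ξ η F → MemF6sub φ ξ η G → innerF e F G = 0 := by
    intro F G hF hG
    exact orth_delta h e (bdata_of_memVF' h hF.1) (bdata_of_memVF' h hG.1)
      (fun x z => by rw [sign_F4 h hF.1.1.1 hF.2.1 x z])
      (fun x z => by rw [sign_F4' h hG.1.1.1 hG.2.1 x z])
  have o25 : ∀ F G, MemF4sub' n e φ ξ η F → MemF7sub φ ξ η G → innerF e F G = 0 := by
    intro F G hF hG
    exact orth_eps h e (bdata_of_memVF' h hF.1) (bdata_of_memVF' h hG.1)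
      (fun x z => by rw [sign_F5 h hF.1.2.2 hF.2.2.1 x z])
      (fun x z => by rw [sign_F5' h hG.1.2.2 hG.2.2 x z])
  have o34 : ∀ F G, MemF5sub' n e φ ξ η F → MemF6sub φ ξ η G → innerF e F G = 0 := by
    intro F G hF hG
    rw [innerF_comm]
    exact orth_eps h e (bdata_of_memVF' h hG.1) (bdata_of_memVF' h hF.1)
      (fun x z => by rw [sign_F5 h hG.1.2.2 hG.2.2 x z])
      (fun x z => by rw [sign_F5' h hF.1.2.2 hF.2.2.1 x z])
  have o35 : ∀ F G, MemF5sub' n e φ ξ η F → MemF7sub φ ξ η G → innerF e F G = 0 := by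
    intro F G hF hG
    exact orth_delta h e (bdata_of_memVF' h hF.1) (bdata_of_memVF' h hG.1)
      (fun x z => by rw [sign_F4 h hF.1.1.1 hF.2.1 x z])
      (fun x z => by rw [sign_F4' h hG.1.1.1 hG.2.1 x z])
  have o45 : ∀ F G, MemF6sub φ ξ η F → MemF7sub φ ξ η G → innerF e F G = 0 := by
    intro F G hF hG
    exact orth_eps h e (bdata_of_memVF' h hF.1) (bdata_of_memVF' h hG.1)
      (fun x z => by rw [sign_F5 h hF.1.2.2 hF.2.2 x z])
      (fun x z => by rw [sign_F5' h hG.1.2.2 hG.2.2 x z])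
  have o06 : ∀ F G, MemF2sub n e φ ξ η F → MemF8sub φ ξ η G → innerF e F G = 0 :=
    fun F G hF hG => orth_GA h e (bd0 F hF).bd hG
  have o16 : ∀ F G, MemF3sub n e φ ξ η F → MemF8sub φ ξ η G → innerF e F G = 0 :=
    fun F G hF hG => orth_GA h e (bd1 F hF).bd hG
  have o26 : ∀ F G, MemF4sub' n e φ ξ η F → MemF8sub φ ξ η G → innerF e F G = 0 :=
    fun F G hF hG => orth_GA h e (bdata_of_memVF' h hF.1) hG
  have o36 : ∀ F G, MemF5sub' n e φ ξ η F → MemF8sub φ ξ η G → innerF e F G = 0 :=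
    fun F G hF hG => orth_GA h e (bdata_of_memVF' h hF.1) hG
  have o46 : ∀ F G, MemF6sub φ ξ η F → MemF8sub φ ξ η G → innerF e F G = 0 :=
    fun F G hF hG => orth_GA h e (bdata_of_memVF' h hF.1) hG
  have o56 : ∀ F G, MemF7sub φ ξ η F → MemF8sub φ ξ η G → innerF e F G = 0 :=
    fun F G hF hG => orth_GA h e (bdata_of_memVF' h hF.1) hG
  intro i j hne F G hF hG
  fin_cases i <;> fin_cases j
  · exact absurd rfl hne
  · exact o01 F G hF hG
  · exact o02 F G hF hG
  · exact o03 F G hF hG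
  · exact o04 F G hF hG
  · exact o05 F G hF hG
  · exact o06 F G hF hG
  · rw [innerF_comm]; exact o01 G F hG hF
  · exact absurd rfl hne
  · exact o12 F G hF hG
  · exact o13 F G hF hG
  · exact o14 F G hF hG
  · exact o15 F G hF hG
  · exact o16 F G hF hG
  · rw [innerF_comm]; exact o02 G F hG hF
  · rw [innerF_comm]; exact o12 G F hG hF
  · exact absurd rfl hne
  · exact o23 F G hF hG
  · exact o24 F G hF hG
  · exact o25 F G hF hG
  · exact o26 F G hF hG
  · rw [innerF_comm]; exact o03 G F hG hF
  · rw [innerF_comm]; exact o13 G F hG hF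
  · rw [innerF_comm]; exact o23 G F hG hF
  · exact absurd rfl hne
  · exact o34 F G hF hG
  · exact o35 F G hF hG
  · exact o36 F G hF hG
  · rw [innerF_comm]; exact o04 G F hG hF
  · rw [innerF_comm]; exact o14 G F hG hF
  · rw [innerF_comm]; exact o24 G F hG hF
  · rw [innerF_comm]; exact o34 G F hG hF
  · exact absurd rfl hne
  · exact o45 F G hF hG
  · exact o46 F G hF hG
  · rw [innerF_comm]; exact o05 G F hG hF
  · rw [innerF_comm]; exact o15 G F hG hF
  · rw [innerF_comm]; exact o25 G F hG hF
  · rw [innerF_comm]; exact o35 G F hG hF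
  · rw [innerF_comm]; exact o45 G F hG hF
  · exact absurd rfl hne
  · exact o56 F G hF hG
  · rw [innerF_comm]; exact o06 G F hG hF
  · rw [innerF_comm]; exact o16 G F hG hF
  · rw [innerF_comm]; exact o26 G F hG hF
  · rw [innerF_comm]; exact o36 G F hG hF
  · rw [innerF_comm]; exact o46 G F hG hF
  · rw [innerF_comm]; exact o56 G F hG hF
  · exact absurd rfl hne

end Aux16
namespace Aux16

variable {V : Type*} [NormedAddCommGroup V] [InnerProductSpace ℝ V]
variable {φ : V →ₗ[ℝ] V} {ξ : V} {η : V →ₗ[ℝ] ℝ}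

/-- data about a compatible isometry. -/
structure ActData (φ : V →ₗ[ℝ] V) (ξ : V) (η : V →ₗ[ℝ] ℝ) (A : V ≃ₗᵢ[ℝ] V) : Prop where
  φs : ∀ x, A.symm (φ x) = φ (A.symm x)
  ξs : A.symm ξ = ξ
  ηs : ∀ x, η (A.symm x) = η x
  ips : ∀ x y : V, ⟪A.symm x, A.symm y⟫ = ⟪x, y⟫

theorem mkActData (h : Hyp φ ξ η) (A : V ≃ₗᵢ[ℝ] V)
    (hc : ∀ x, A (φ x) = φ (A x)) (hx : A ξ = ξ) : ActData φ ξ η A := by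
  have ips : ∀ x y : V, ⟪A.symm x, A.symm y⟫ = ⟪x, y⟫ := fun x y =>
    A.symm.inner_map_map x y
  have ξs : A.symm ξ = ξ := by
    calc A.symm ξ = A.symm (A ξ) := by rw [hx]
    _ = ξ := A.symm_apply_apply ξ
  have φs : ∀ x, A.symm (φ x) = φ (A.symm x) := by
    intro x
    apply A.injective
    rw [A.apply_symm_apply, hc (A.symm x), A.apply_symm_apply]
  refine ⟨φs, ξs, fun x => ?_, ips⟩
  calc η (A.symm x) = ⟪A.symm x, A.symm ξ⟫ := by rw [ξs, h.ip]
  _ = ⟪x, ξ⟫ := ips x ξ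
  _ = η x := h.ip x

theorem ActData.hs (h : Hyp φ ξ η) {A : V ≃ₗᵢ[ℝ] V} (hA : ActData φ ξ η A) :
    ∀ x, A.symm (hMap φ x) = hMap φ (A.symm x) := by
  intro x
  rw [h.hMap_eq, h.hMap_eq, map_sub, map_smul, hA.ξs, hA.ηs]

theorem ActData.repr {ι : Type*} [Fintype ι] {A : V ≃ₗᵢ[ℝ] V} (hA : ActData φ ξ η A)
    (e : OrthonormalBasis ι ℝ V) :
    ∀ w : V, ∑ i, ⟪A.symm (e i), w⟫ • A.symm (e i) = w := by
  intro w
  have h1 : ∀ i, ⟪A.symm (e i), w⟫ = ⟪e i, A w⟫ := by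
    intro i
    calc ⟪A.symm (e i), w⟫ = ⟪A.symm (e i), A.symm (A w)⟫ := by rw [A.symm_apply_apply]
    _ = ⟪e i, A w⟫ := hA.ips _ _
  rw [Finset.sum_congr rfl fun i (_ : i ∈ Finset.univ) => by rw [h1 i]]
  have h2 : ∑ i, ⟪e i, A w⟫ • A.symm (e i) = A.symm (∑ i, ⟪e i, A w⟫ • e i) := by
    rw [map_sum]
    exact Finset.sum_congr rfl fun i _ => (A.symm.map_smul _ _).symm
  rw [h2, e.sum_repr' (A w), A.symm_apply_apply]

theorem act_tri {A : V ≃ₗᵢ[ℝ] V} {F : V → V → V → ℝ} (hT : Trilinear F) :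
    Trilinear (actA A F) := by
  have hAsl : ∀ (f : V → ℝ), IsLinearMap ℝ f → IsLinearMap ℝ (fun v => f (A.symm v)) :=
    fun f hf => ⟨fun a b => by rw [map_add, hf.map_add], fun c a => by
      rw [map_smul, hf.map_smul]⟩
  exact ⟨fun y z => hAsl _ (hT.1 (A.symm y) (A.symm z)),
    fun x z => hAsl _ (hT.2.1 (A.symm x) (A.symm z)),
    fun x y => hAsl _ (hT.2.2 (A.symm x) (A.symm y))⟩

theorem act_InF (h : Hyp φ ξ η) {A : V ≃ₗᵢ[ℝ] V} (hA : ActData φ ξ η A)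
    {F : V → V → V → ℝ} (hG : InF φ ξ η F) : InF φ ξ η (actA A F) := by
  refine ⟨act_tri hG.1, fun x y z => hG.2.1 _ _ _, fun x y z => ?_⟩
  show F (A.symm x) (A.symm y) (A.symm z) = -F (A.symm x) (A.symm (φ y)) (A.symm (φ z))
    + η y * F (A.symm x) (A.symm ξ) (A.symm z) + η z * F (A.symm x) (A.symm y) (A.symm ξ)
  rw [hA.φs, hA.φs, hA.ξs]
  have h1 := hG.2.2 (A.symm x) (A.symm y) (A.symm z)
  rw [hA.ηs, hA.ηs] at h1
  exact h1

theorem act_hF (h : Hyp φ ξ η) {A : V ≃ₗᵢ[ℝ] V} (hA : ActData φ ξ η A)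
    {F : V → V → V → ℝ} (hh : hF φ F = 0) : hF φ (actA A F) = 0 := by
  funext x y z
  show F (A.symm (hMap φ x)) (A.symm (hMap φ y)) (A.symm (hMap φ z)) = 0
  rw [hA.hs h, hA.hs h, hA.hs h]
  have := congrFun (congrFun (congrFun hh (A.symm x)) (A.symm y)) (A.symm z)
  simpa [hF] using this

theorem act_F4 {A : V ≃ₗᵢ[ℝ] V} (hA : ActData φ ξ η A) (F : V → V → V → ℝ) :
    F4 φ ξ η (actA A F) = actA A (F4 φ ξ η F) := by
  funext x y z
  simp only [F4, actA, hA.φs, hA.ξs, hA.ηs]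

theorem act_F5 {A : V ≃ₗᵢ[ℝ] V} (hA : ActData φ ξ η A) (F : V → V → V → ℝ) :
    F5 ξ η (actA A F) = actA A (F5 ξ η F) := by
  funext x y z
  simp only [F5, actA, hA.ξs, hA.ηs]

theorem act_fTr {ι : Type*} [Fintype ι] {A : V ≃ₗᵢ[ℝ] V} (hA : ActData φ ξ η A)
    (e : OrthonormalBasis ι ℝ V) {F : V → V → V → ℝ} (hT : Trilinear F) :
    fTr e (actA A F) ξ = fTr e F ξ := by
  unfold fTr actA
  rw [Finset.sum_congr rfl fun i (_ : i ∈ Finset.univ) => by rw [hA.ξs]]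
  exact master_basis e (hA.repr e) (T := fun a b => F a b ξ)
    (fun w => hT.1 w ξ) (fun v => hT.2.1 v ξ)

theorem act_fTrStar {ι : Type*} [Fintype ι] {A : V ≃ₗᵢ[ℝ] V} (hA : ActData φ ξ η A)
    (e : OrthonormalBasis ι ℝ V) {F : V → V → V → ℝ} (hT : Trilinear F) :
    fTrStar φ e (actA A F) ξ = fTrStar φ e F ξ := by
  unfold fTrStar actA
  rw [Finset.sum_congr rfl fun i (_ : i ∈ Finset.univ) => by rw [hA.ξs, hA.φs]]
  exact master_basis_φ e φ (hA.repr e) (T := fun a b => F a b ξ)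
    (fun w => hT.1 w ξ) (fun v => hT.2.1 v ξ)

theorem act_F7 {ι : Type*} [Fintype ι] {n : ℕ} {A : V ≃ₗᵢ[ℝ] V} (hA : ActData φ ξ η A)
    (e : OrthonormalBasis ι ℝ V) {F : V → V → V → ℝ} (hT : Trilinear F) :
    F7 n e ξ η (actA A F) = actA A (F7 n e ξ η F) := by
  funext x y z
  simp only [F7, actA, hA.ηs]
  rw [act_fTr hA e hT, hA.ips, hA.ips]

theorem act_F8 {ι : Type*} [Fintype ι] {n : ℕ} {A : V ≃ₗᵢ[ℝ] V} (hA : ActData φ ξ η A)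
    (e : OrthonormalBasis ι ℝ V) {F : V → V → V → ℝ} (hT : Trilinear F) :
    F8 n φ e ξ η (actA A F) = actA A (F8 n φ e ξ η F) := by
  funext x y z
  simp only [F8, actA, hA.ηs]
  rw [act_fTrStar hA e hT, ← hA.φs, ← hA.φs, hA.ips, hA.ips]

theorem part4 (h : Hyp φ ξ η) {n : ℕ} (e : OrthonormalBasis (Fin (2*n+1)) ℝ V)
    (A : V ≃ₗᵢ[ℝ] V) (hc : ∀ x, A (φ x) = φ (A x)) (hx : A ξ = ξ) :
    ∀ i F, P16 n e φ ξ η i F → P16 n e φ ξ η i (actA A F) := by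
  have hA := mkActData h A hc hx
  have act_neg : ∀ G : V → V → V → ℝ, actA A (-G) = -(actA A G) := fun G => rfl
  have act_s1 : ∀ (F : V → V → V → ℝ), (∀ y z, F ξ y z = 0) →
      ∀ y z, actA A F ξ y z = 0 := by
    intro F hF y z
    show F (A.symm ξ) (A.symm y) (A.symm z) = 0
    rw [hA.ξs, hF]
  have act_s3 : ∀ (F : V → V → V → ℝ), (∀ x y, F x y ξ = 0) →
      ∀ x y, actA A F x y ξ = 0 := by
    intro F hF x y
    show F (A.symm x) (A.symm y) (A.symm ξ) = 0
    rw [hA.ξs, hF]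
  have actVF' : ∀ (F : V → V → V → ℝ), MemVF' φ ξ η F → MemVF' φ ξ η (actA A F) :=
    fun F hG => ⟨act_InF h hA hG.1, act_hF h hA hG.2.1, act_s1 F hG.2.2⟩
  intro i F hG
  fin_cases i
  · -- MemF2sub
    refine ⟨act_InF h hA hG.1, ?_⟩
    rw [act_F7 hA e hG.1.1]
    exact congrArg (actA A) hG.2
  · refine ⟨act_InF h hA hG.1, ?_⟩
    rw [act_F8 hA e hG.1.1]
    exact congrArg (actA A) hG.2
  · refine ⟨actVF' F hG.1, ?_, ?_, ?_⟩
    · rw [act_F4 hA F]; exact congrArg (actA A) hG.2.1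
    · rw [act_F5 hA F]; exact congrArg (actA A) hG.2.2.1
    · rw [act_fTr hA e hG.1.1.1]; exact hG.2.2.2
  · refine ⟨actVF' F hG.1, ?_, ?_, ?_⟩
    · rw [act_F4 hA F]; exact congrArg (actA A) hG.2.1
    · calc actA A F = actA A (-(F5 ξ η F)) := congrArg (actA A) hG.2.2.1
      _ = -(actA A (F5 ξ η F)) := act_neg _
      _ = -F5 ξ η (actA A F) := by rw [act_F5 hA F]
    · rw [act_fTrStar hA e hG.1.1.1]; exact hG.2.2.2
  · refine ⟨actVF' F hG.1, ?_, ?_⟩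
    · calc actA A F = actA A (-(F4 φ ξ η F)) := congrArg (actA A) hG.2.1
      _ = -(actA A (F4 φ ξ η F)) := act_neg _
      _ = -F4 φ ξ η (actA A F) := by rw [act_F4 hA F]
    · rw [act_F5 hA F]; exact congrArg (actA A) hG.2.2
  · refine ⟨actVF' F hG.1, ?_, ?_⟩
    · calc actA A F = actA A (-(F4 φ ξ η F)) := congrArg (actA A) hG.2.1
      _ = -(actA A (F4 φ ξ η F)) := act_neg _
      _ = -F4 φ ξ η (actA A F) := by rw [act_F4 hA F]
    · calc actA A F = actA A (-(F5 ξ η F)) := congrArg (actA A) hG.2.2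
      _ = -(actA A (F5 ξ η F)) := act_neg _
      _ = -F5 ξ η (actA A F) := by rw [act_F5 hA F]
  · exact ⟨act_InF h hA hG.1, act_hF h hA hG.2.1, act_s3 F hG.2.2⟩

end Aux16
theorem stmt16 (n : ℕ) (φ : V →ₗ[ℝ] V) (ξ : V) (η : V →ₗ[ℝ] ℝ)
    (hacm : ACM n φ ξ η) (hn : 1 ≤ n) (e : OrthonormalBasis (Fin (2 * n + 1)) ℝ V) :
    (∀ F, MemVF φ ξ η F →
      (∀ i, P16 n e φ ξ η i (p16 n e φ ξ η F i)) ∧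
      ∀ x y z, F x y z = ∑ i : Fin 7, p16 n e φ ξ η F i x y z) ∧
    (∀ F, MemVF φ ξ η F →
      ∃! q : Fin 7 → (V → V → V → ℝ),
        (∀ i, P16 n e φ ξ η i (q i)) ∧
        ∀ x y z, F x y z = ∑ i : Fin 7, q i x y z) ∧
    (∀ i j, i ≠ j → ∀ F G, P16 n e φ ξ η i F → P16 n e φ ξ η j G →
      innerF e F G = 0) ∧
    (∀ A : V ≃ₗᵢ[ℝ] V, (∀ x, A (φ x) = φ (A x)) → A ξ = ξ →
      ∀ i F, P16 n e φ ξ η i F → P16 n e φ ξ η i (actA A F)) := by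
  have h : Aux16.Hyp φ ξ η :=
    ⟨hacm.2.1, hacm.2.2.1, hacm.2.2.2.1, hacm.2.2.2.2.1, hacm.2.2.2.2.2⟩
  exact ⟨fun F hF => Aux16.part1 h hn e hF,
    fun F hF => Aux16.part2 h hn e hF,
    Aux16.part3 h e,
    fun A hc hx => Aux16.part4 h e A hc hx⟩
end
end

section
/- For every F ∈ h𝔽 = {F ∈ 𝔽 : F₁(F) = F₂(F) = 0}, the forms F₉(F), F₁₀(F), F₁₁(F) and F₁₂(F) are again elements of h𝔽. -/
open scoped BigOperators RealInnerProductSpace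

noncomputable section

variable {V : Type*} [NormedAddCommGroup V] [InnerProductSpace ℝ V]

/-!
A form lies in `h𝔽` exactly when it is trilinear, skew in its last two arguments, vanishes as soon
as `ξ` is put into one of its first two arguments, and changes sign when `φ` is applied to both of
its last two arguments; each of `F₉, …, F₁₂` inherits these properties from `F ∈ h𝔽`.
For `F₁₀, F₁₁, F₁₂` the point is that `φ² = -1` modulo `ξ` and that `φ` moves between the last two
arguments of `F`, `F(x, φy, z) = F(x, y, φz)`, which is how skewness survives.
For `F₉` it is that `f(F)` vanishes at `ξ` and `f(F) ∘ φ² = -f(F)`, while `⟨x, φ²y⟩ = -⟨hx, hy⟩`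
and `⟨hx, φy⟩ = ⟨x, φy⟩` exchange the two pairs of terms.
-/

namespace IsLinearMap

variable {R M N : Type*} [CommRing R] [AddCommGroup M] [Module R M] [AddCommGroup N] [Module R N]
  {f g : M → R}

theorem add (hf : IsLinearMap R f) (hg : IsLinearMap R g) : IsLinearMap R fun x => f x + g x :=
  (hf.mk' f + hg.mk' g).isLinear

theorem sub (hf : IsLinearMap R f) (hg : IsLinearMap R g) : IsLinearMap R fun x => f x - g x :=
  (hf.mk' f - hg.mk' g).isLinear

theorem const_mul (c : R) (hf : IsLinearMap R f) : IsLinearMap R fun x => c * f x :=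
  (c • hf.mk' f).isLinear

theorem mul_const (c : R) (hf : IsLinearMap R f) : IsLinearMap R fun x => f x * c :=
  ((hf.mk' f).smulRight c).isLinear

theorem comp_linearMap (hf : IsLinearMap R f) (A : N →ₗ[R] M) : IsLinearMap R fun x => f (A x) :=
  (hf.mk' f ∘ₗ A).isLinear

end IsLinearMap

namespace Trilinear

variable {F G : V → V → V → ℝ}

theorem map_zero_left (hF : Trilinear F) (y z : V) : F 0 y z = 0 :=
  (hF.1 y z).map_zero

theorem map_zero_mid (hF : Trilinear F) (x z : V) : F x 0 z = 0 :=
  (hF.2.1 x z).map_zero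

theorem add (hF : Trilinear F) (hG : Trilinear G) : Trilinear fun x y z => F x y z + G x y z :=
  ⟨fun y z => (hF.1 y z).add (hG.1 y z), fun x z => (hF.2.1 x z).add (hG.2.1 x z),
    fun x y => (hF.2.2 x y).add (hG.2.2 x y)⟩

theorem sub (hF : Trilinear F) (hG : Trilinear G) : Trilinear fun x y z => F x y z - G x y z :=
  ⟨fun y z => (hF.1 y z).sub (hG.1 y z), fun x z => (hF.2.1 x z).sub (hG.2.1 x z),
    fun x y => (hF.2.2 x y).sub (hG.2.2 x y)⟩

theorem const_mul (c : ℝ) (hF : Trilinear F) : Trilinear fun x y z => c * F x y z :=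
  ⟨fun y z => (hF.1 y z).const_mul c, fun x z => (hF.2.1 x z).const_mul c,
    fun x y => (hF.2.2 x y).const_mul c⟩

theorem comp (hF : Trilinear F) (A B C : V →ₗ[ℝ] V) :
    Trilinear fun x y z => F (A x) (B y) (C z) :=
  ⟨fun y z => (hF.1 (B y) (C z)).comp_linearMap A, fun x z => (hF.2.1 (A x) (C z)).comp_linearMap B,
    fun x y => (hF.2.2 (A x) (B y)).comp_linearMap C⟩

theorem rotate (hF : Trilinear F) : Trilinear fun x y z => F y z x :=
  ⟨fun y z => hF.2.2 y z, fun x z => hF.1 z x, fun x y => hF.2.1 y x⟩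

theorem swap (hF : Trilinear F) : Trilinear fun x y z => F x z y :=
  ⟨fun y z => hF.1 z y, fun x z => hF.2.2 x z, fun x y => hF.2.1 x y⟩

theorem isLinearMap_fTr {ι : Type*} [Fintype ι] (hF : Trilinear F) (e : OrthonormalBasis ι ℝ V) :
    IsLinearMap ℝ (fTr e F) :=
  ⟨fun a b => by simp only [fTr, (hF.2.2 _ _).map_add, Finset.sum_add_distrib],
    fun c a => by simp only [fTr, (hF.2.2 _ _).map_smul, smul_eq_mul, Finset.mul_sum]⟩

end Trilinear

theorem trilinear_inner_mul {f : V → ℝ} (hf : IsLinearMap ℝ f) :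
    Trilinear fun x y z => ⟪x, y⟫ * f z :=
  ⟨fun y z => ((innerₗ V).flip y).isLinear.mul_const (f z),
    fun x z => (innerₗ V x).isLinear.mul_const (f z), fun x y => hf.const_mul ⟪x, y⟫⟩

theorem trilinear_F9 (m : ℕ) (φ : V →ₗ[ℝ] V) {ι : Type*} [Fintype ι] (e : OrthonormalBasis ι ℝ V)
    {F : V → V → V → ℝ} (hF : Trilinear F) : Trilinear (F9 m φ e F) := by
  have hf := trilinear_inner_mul (hF.isLinearMap_fTr e)
  have hh := hf.comp (-(φ ∘ₗ φ)) (-(φ ∘ₗ φ)) LinearMap.id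
  have hφ := hf.comp LinearMap.id φ φ
  exact (((hh.sub hh.swap).sub hφ).add hφ.swap).const_mul _

theorem trilinear_F10 (φ : V →ₗ[ℝ] V) {F : V → V → V → ℝ} (hF : Trilinear F) :
    Trilinear (F10 φ F) :=
  (hF.add (hF.comp φ φ LinearMap.id)).const_mul _

theorem trilinear_F11 (φ : V →ₗ[ℝ] V) {F : V → V → V → ℝ} (hF : Trilinear F) :
    Trilinear (F11 φ F) := by
  have hφ := hF.comp φ φ LinearMap.id
  exact ((((hF.add hF.rotate).add hF.rotate.rotate).sub hφ).sub hφ.rotate).sub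
    hφ.rotate.rotate |>.const_mul _

theorem trilinear_F12 (φ : V →ₗ[ℝ] V) {F : V → V → V → ℝ} (hF : Trilinear F) :
    Trilinear (F12 φ F) :=
  (hF.sub (hF.comp φ φ LinearMap.id)).const_mul _

namespace ACM

variable {n : ℕ} {φ : V →ₗ[ℝ] V} {ξ : V} {η : V →ₗ[ℝ] ℝ}

theorem phi_phi (hacm : ACM n φ ξ η) (x : V) : φ (φ x) = -x + η x • ξ := hacm.2.1 x

theorem phi_xi (hacm : ACM n φ ξ η) : φ ξ = 0 := hacm.2.2.1

theorem eta_phi (hacm : ACM n φ ξ η) (x : V) : η (φ x) = 0 := hacm.2.2.2.1 x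

theorem inner_xi_self (hacm : ACM n φ ξ η) : ⟪ξ, ξ⟫ = 1 := hacm.2.2.2.2.1

theorem inner_phi_phi (hacm : ACM n φ ξ η) (x y : V) : ⟪φ x, φ y⟫ = ⟪x, y⟫ - η x * η y :=
  hacm.2.2.2.2.2 x y

theorem eta_xi (hacm : ACM n φ ξ η) : η ξ = 1 := by
  have h : (η ξ - 1) • ξ = 0 := by
    rw [sub_smul, one_smul, sub_eq_neg_add, ← hacm.phi_phi, hacm.phi_xi, map_zero]
  have hξ : ξ ≠ 0 := by
    rintro rfl
    simpa using hacm.inner_xi_self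
  exact sub_eq_zero.1 ((smul_eq_zero.1 h).resolve_right hξ)

theorem eta_eq_inner (hacm : ACM n φ ξ η) (x : V) : η x = ⟪x, ξ⟫ := by
  have h := hacm.inner_phi_phi x ξ
  rw [hacm.phi_xi, inner_zero_right, hacm.eta_xi, mul_one] at h
  linarith

theorem inner_xi_phi (hacm : ACM n φ ξ η) (y : V) : ⟪ξ, φ y⟫ = 0 := by
  rw [real_inner_comm, ← hacm.eta_eq_inner, hacm.eta_phi]

theorem hMap_eq (hacm : ACM n φ ξ η) (x : V) : hMap φ x = x - η x • ξ := by
  rw [hMap, hacm.phi_phi]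
  abel

theorem hMap_xi (hacm : ACM n φ ξ η) : hMap φ ξ = 0 := by
  rw [hacm.hMap_eq, hacm.eta_xi, one_smul, sub_self]

theorem hMap_phi (hacm : ACM n φ ξ η) (y : V) : hMap φ (φ y) = φ y := by
  rw [hMap, hacm.phi_phi, hacm.eta_phi, zero_smul, add_zero, neg_neg]

theorem inner_hMap_phi (hacm : ACM n φ ξ η) (x y : V) : ⟪hMap φ x, φ y⟫ = ⟪x, φ y⟫ := by
  rw [hacm.hMap_eq, inner_sub_left, real_inner_smul_left, hacm.inner_xi_phi, mul_zero, sub_zero]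

theorem inner_phi_sq (hacm : ACM n φ ξ η) (x y : V) :
    ⟪x, φ (φ y)⟫ = -⟪hMap φ x, hMap φ y⟫ := by
  rw [hacm.phi_phi, hacm.hMap_eq, hacm.hMap_eq]
  simp only [inner_add_right, inner_neg_right, inner_sub_left, inner_sub_right,
    real_inner_smul_left, real_inner_smul_right]
  rw [real_inner_comm y ξ, ← hacm.eta_eq_inner x, ← hacm.eta_eq_inner y, hacm.inner_xi_self]
  ring

end ACM

namespace MemHF

variable {n : ℕ} {φ : V →ₗ[ℝ] V} {ξ : V} {η : V →ₗ[ℝ] ℝ} {F : V → V → V → ℝ}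

theorem trilinear (hF : MemHF φ ξ η F) : Trilinear F := hF.1.1

theorem apply_swap (hF : MemHF φ ξ η F) (x y z : V) : F x y z = -F x z y := hF.1.2.1 x y z

theorem apply_xi_left (hacm : ACM n φ ξ η) (hF : MemHF φ ξ η F) (y z : V) : F ξ y z = 0 := by
  simpa [F1, hacm.eta_xi] using congrFun (congrFun (congrFun hF.2.1 ξ) y) z

theorem apply_xi_mid (hacm : ACM n φ ξ η) (hF : MemHF φ ξ η F) (x z : V) : F x ξ z = 0 := by
  have hξξ : F x ξ ξ = 0 := by linarith [hF.apply_swap x ξ ξ]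
  simpa [F2, hacm.eta_xi, hξξ] using congrFun (congrFun (congrFun hF.2.2 x) ξ) z

theorem apply_xi_right (hacm : ACM n φ ξ η) (hF : MemHF φ ξ η F) (x y : V) : F x y ξ = 0 := by
  rw [hF.apply_swap, hF.apply_xi_mid hacm, neg_zero]

theorem apply_phi_phi (hacm : ACM n φ ξ η) (hF : MemHF φ ξ η F) (x y z : V) :
    F x (φ y) (φ z) = -F x y z := by
  have h := hF.1.2.2 x y z
  rw [hF.apply_xi_mid hacm, hF.apply_xi_right hacm, mul_zero, mul_zero, add_zero, add_zero] at h
  linarith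

theorem apply_phi_sq_left (hacm : ACM n φ ξ η) (hF : MemHF φ ξ η F) (x y z : V) :
    F (φ (φ x)) y z = -F x y z := by
  have hl := hF.trilinear.1 y z
  rw [hacm.phi_phi, hl.map_add, hl.map_neg, hl.map_smul,
    hF.apply_xi_left hacm, smul_zero, add_zero]

theorem apply_phi_sq_mid (hacm : ACM n φ ξ η) (hF : MemHF φ ξ η F) (x y z : V) :
    F x (φ (φ y)) z = -F x y z := by
  have hl := hF.trilinear.2.1 x z
  rw [hacm.phi_phi, hl.map_add, hl.map_neg, hl.map_smul,
    hF.apply_xi_mid hacm, smul_zero, add_zero]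

theorem apply_phi_sq_right (hacm : ACM n φ ξ η) (hF : MemHF φ ξ η F) (x y z : V) :
    F x y (φ (φ z)) = -F x y z := by
  have hl := hF.trilinear.2.2 x y
  rw [hacm.phi_phi, hl.map_add, hl.map_neg, hl.map_smul,
    hF.apply_xi_right hacm, smul_zero, add_zero]

theorem apply_phi_mid (hacm : ACM n φ ξ η) (hF : MemHF φ ξ η F) (x y z : V) :
    F x (φ y) z = F x y (φ z) := by
  have h := hF.apply_phi_phi hacm x (φ y) z
  rw [hF.apply_phi_sq_mid hacm] at h
  linarith

theorem apply_phi_mid_swap (hacm : ACM n φ ξ η) (hF : MemHF φ ξ η F) (x y z : V) :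
    F x (φ y) z = -F x (φ z) y := by
  rw [hF.apply_phi_mid hacm, hF.apply_swap]

theorem fTr_xi (hacm : ACM n φ ξ η) (hF : MemHF φ ξ η F) {ι : Type*} [Fintype ι]
    (e : OrthonormalBasis ι ℝ V) : fTr e F ξ = 0 :=
  Finset.sum_eq_zero fun _ _ => hF.apply_xi_right hacm _ _

theorem fTr_phi_sq (hacm : ACM n φ ξ η) (hF : MemHF φ ξ η F) {ι : Type*} [Fintype ι]
    (e : OrthonormalBasis ι ℝ V) (z : V) : fTr e F (φ (φ z)) = -fTr e F z := by
  simp only [fTr, hF.apply_phi_sq_right hacm, Finset.sum_neg_distrib]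

theorem of_trilinear {G : V → V → V → ℝ} (hG : Trilinear G) (skew : ∀ x y z, G x y z = -G x z y)
    (xi_left : ∀ y z, G ξ y z = 0) (xi_mid : ∀ x z, G x ξ z = 0)
    (phi_phi : ∀ x y z, G x (φ y) (φ z) = -G x y z) :
    MemHF φ ξ η G := by
  refine ⟨⟨hG, skew, fun x y z => ?_⟩, ?_, ?_⟩
  · rw [phi_phi, xi_mid, skew x y ξ, xi_mid]
    ring
  · funext x y z
    simp [F1, xi_left]
  · funext x y z
    simp [F2, xi_mid]

end MemHF

section FormsOfHF

variable {n : ℕ} {φ : V →ₗ[ℝ] V} {ξ : V} {η : V →ₗ[ℝ] ℝ} {F : V → V → V → ℝ}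

theorem memHF_F9 (hacm : ACM n φ ξ η) (hF : MemHF φ ξ η F) (m : ℕ) {ι : Type*} [Fintype ι]
    (e : OrthonormalBasis ι ℝ V) : MemHF φ ξ η (F9 m φ e F) := by
  have hf := hF.trilinear.isLinearMap_fTr e
  refine MemHF.of_trilinear (trilinear_F9 m φ e hF.trilinear) (fun x y z => ?_) (fun y z => ?_)
    (fun x z => ?_) (fun x y z => ?_)
  · simp only [F9]
    ring
  · simp only [F9, hacm.hMap_xi, inner_zero_left, hacm.inner_xi_phi]
    ring
  · simp only [F9, hacm.hMap_xi, inner_zero_right, hacm.phi_xi, hF.fTr_xi hacm, hf.map_zero]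
    ring
  · simp only [F9]
    rw [hacm.hMap_phi y, hacm.hMap_phi z, hacm.inner_hMap_phi x y, hacm.inner_hMap_phi x z,
      hacm.inner_phi_sq x y, hacm.inner_phi_sq x z, hF.fTr_phi_sq hacm, hF.fTr_phi_sq hacm]
    ring

theorem memHF_F10 (hacm : ACM n φ ξ η) (hF : MemHF φ ξ η F) : MemHF φ ξ η (F10 φ F) := by
  refine MemHF.of_trilinear (trilinear_F10 φ hF.trilinear) (fun x y z => ?_) (fun y z => ?_)
    (fun x z => ?_) (fun x y z => ?_)
  · simp only [F10]
    rw [hF.apply_swap x y z, hF.apply_phi_mid_swap hacm (φ x) y z]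
    ring
  · simp [F10, hacm.phi_xi, hF.apply_xi_left hacm, hF.trilinear.map_zero_left]
  · simp [F10, hacm.phi_xi, hF.apply_xi_mid hacm, hF.trilinear.map_zero_mid]
  · simp only [F10]
    rw [hF.apply_phi_phi hacm x y z, hF.apply_phi_phi hacm (φ x) (φ y) z]
    ring

theorem memHF_F11 (hacm : ACM n φ ξ η) (hF : MemHF φ ξ η F) : MemHF φ ξ η (F11 φ F) := by
  refine MemHF.of_trilinear (trilinear_F11 φ hF.trilinear) (fun x y z => ?_) (fun y z => ?_)
    (fun x z => ?_) (fun x y z => ?_)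
  · simp only [F11]
    rw [hF.apply_swap x z y, hF.apply_swap z y x, hF.apply_swap y x z,
      hF.apply_phi_mid_swap hacm (φ x) z y, hF.apply_phi_mid_swap hacm (φ z) y x,
      hF.apply_phi_mid_swap hacm (φ y) x z]
    ring
  · simp [F11, hacm.phi_xi, hF.apply_xi_left hacm, hF.apply_xi_mid hacm, hF.apply_xi_right hacm,
      hF.trilinear.map_zero_left, hF.trilinear.map_zero_mid]
  · simp [F11, hacm.phi_xi, hF.apply_xi_left hacm, hF.apply_xi_mid hacm, hF.apply_xi_right hacm,
      hF.trilinear.map_zero_left, hF.trilinear.map_zero_mid]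
  · simp only [F11]
    rw [hF.apply_phi_phi hacm x y z, ← hF.apply_phi_mid hacm (φ z) x y,
      hF.apply_phi_phi hacm (φ x) (φ y) z, hF.apply_phi_sq_left hacm y,
      hF.apply_phi_sq_mid hacm y z, hF.apply_phi_sq_left hacm z, hF.apply_phi_phi hacm z x y]
    ring

theorem memHF_F12 (hacm : ACM n φ ξ η) (hF : MemHF φ ξ η F) : MemHF φ ξ η (F12 φ F) := by
  refine MemHF.of_trilinear (trilinear_F12 φ hF.trilinear) (fun x y z => ?_) (fun y z => ?_)
    (fun x z => ?_) (fun x y z => ?_)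
  · simp only [F12]
    rw [hF.apply_swap x y z, hF.apply_phi_mid_swap hacm (φ x) y z]
    ring
  · simp [F12, hacm.phi_xi, hF.apply_xi_left hacm, hF.trilinear.map_zero_left]
  · simp [F12, hacm.phi_xi, hF.apply_xi_mid hacm, hF.trilinear.map_zero_mid]
  · simp only [F12]
    rw [hF.apply_phi_phi hacm x y z, hF.apply_phi_phi hacm (φ x) (φ y) z]
    ring

end FormsOfHF

theorem stmt17_general (n : ℕ) (φ : V →ₗ[ℝ] V) (ξ : V) (η : V →ₗ[ℝ] ℝ)
    (hacm : ACM n φ ξ η) (e : OrthonormalBasis (Fin (2 * n + 1)) ℝ V)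
    (F : V → V → V → ℝ) (hFmem : MemHF φ ξ η F) :
    MemHF φ ξ η (F9 n φ e F) ∧ MemHF φ ξ η (F10 φ F) ∧
      MemHF φ ξ η (F11 φ F) ∧ MemHF φ ξ η (F12 φ F) :=
  ⟨memHF_F9 hacm hFmem n e, memHF_F10 hacm hFmem, memHF_F11 hacm hFmem, memHF_F12 hacm hFmem⟩

theorem stmt17 (n : ℕ) (φ : V →ₗ[ℝ] V) (ξ : V) (η : V →ₗ[ℝ] ℝ)
    (hacm : ACM n φ ξ η) (hn : 2 ≤ n) (e : OrthonormalBasis (Fin (2 * n + 1)) ℝ V)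
    (F : V → V → V → ℝ) (hFmem : MemHF φ ξ η F) :
    MemHF φ ξ η (F9 n φ e F) ∧ MemHF φ ξ η (F10 φ F) ∧
      MemHF φ ξ η (F11 φ F) ∧ MemHF φ ξ η (F12 φ F) :=
  stmt17_general n φ ξ η hacm e F hFmem
end
end
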